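/- arXiv:math/0603548 — 6 statements merged into one kernel-verified Lean document; each statement's English description precedes it below -/
import Mathlib

section
/- There is a group isomorphism from H to G_BV sending x_0 ↦ x_0, x_1 ↦ x_1, σ_1 ↦ σ_1, and τ_1 ↦ τ_1. (Hence BV admits a finite presentation with 4 generators and 18 relators.) -/
/-- Relator corresponding to the equation `u = v`. -/
def grel {α : Type*} (u v : FreeGroup α) : FreeGroup α := u * v⁻¹

/-- Generators of the braided Thompson group `BV`.  `s i` denotes `σ_{i+1}` and
`t i` denotes `τ_{i+1}` (so that exactly the generators `σ_i, τ_i` with `i ≥ 1` occur). -/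
inductive BVGen : Type
  | x : ℕ → BVGen
  | s : ℕ → BVGen
  | t : ℕ → BVGen

namespace BVGen

/-- The free-group letter `x_i`. -/
def X (i : ℕ) : FreeGroup BVGen := FreeGroup.of (BVGen.x i)

/-- The free-group letter `σ_i` (meaningful for `i ≥ 1`). -/
def S (i : ℕ) : FreeGroup BVGen := FreeGroup.of (BVGen.s (i - 1))

/-- The free-group letter `τ_i` (meaningful for `i ≥ 1`). -/
def T (i : ℕ) : FreeGroup BVGen := FreeGroup.of (BVGen.t (i - 1))

/-- The defining relations of the braided Thompson group `BV`. -/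
def bvRels : Set (FreeGroup BVGen) :=
  { g |
    (∃ i j, i < j ∧ g = grel (X j * X i) (X i * X (j + 1))) ∨
    (∃ i j, 1 ≤ i ∧ i + 2 ≤ j ∧ g = grel (S i * S j) (S j * S i)) ∨
    (∃ i, 1 ≤ i ∧ g = grel (S i * S (i + 1) * S i) (S (i + 1) * S i * S (i + 1))) ∨
    (∃ i j, 1 ≤ i ∧ i + 2 ≤ j ∧ g = grel (S i * T j) (T j * S i)) ∨
    (∃ i, 1 ≤ i ∧ g = grel (S i * T (i + 1) * S i) (T (i + 1) * S i * T (i + 1))) ∨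
    (∃ i j, 1 ≤ i ∧ i < j ∧ g = grel (S i * X j) (X j * S i)) ∨
    (∃ i, 1 ≤ i ∧ g = grel (S i * X i) (X (i - 1) * S (i + 1) * S i)) ∨
    (∃ i j, j + 2 ≤ i ∧ g = grel (S i * X j) (X j * S (i + 1))) ∨
    (∃ i, g = grel (S (i + 1) * X i) (X (i + 1) * S (i + 1) * S (i + 2))) ∨
    (∃ i j, j + 2 ≤ i ∧ g = grel (T i * X j) (X j * T (i + 1))) ∨
    (∃ i, 1 ≤ i ∧ g = grel (T i * X (i - 1)) (S i * T (i + 1))) ∨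
    (∃ i, 1 ≤ i ∧ g = grel (T i) (X (i - 1) * T (i + 1) * S i)) }

end BVGen

/-- The braided Thompson group `BV`, given by its infinite presentation. -/
abbrev GBV : Type := PresentedGroup BVGen.bvRels

namespace GBV

/-- The generator `x_i` of `BV`. -/
def xg (i : ℕ) : GBV := PresentedGroup.of (BVGen.x i)

/-- The generator `σ_i` of `BV` (meaningful for `i ≥ 1`). -/
def sg (i : ℕ) : GBV := PresentedGroup.of (BVGen.s (i - 1))

/-- The generator `τ_i` of `BV` (meaningful for `i ≥ 1`). -/
def tg (i : ℕ) : GBV := PresentedGroup.of (BVGen.t (i - 1))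

/-- H_n: the subgroup of `BV` generated by the B_n generators
`σ_1, …, σ_{n-2}, τ_{n-1}`. -/
def Hn (n : ℕ) : Subgroup GBV :=
  Subgroup.closure ({g | ∃ i, 1 ≤ i ∧ i + 2 ≤ n ∧ g = sg i} ∪ {tg (n - 1)})

end GBV

/-- The four generators of the finite presentation `H` of `BV`. -/
inductive HGen : Type
  | x0 | x1 | s1 | t1

/-- The abbreviations `x_i` in the free group on the four generators:
`x_{i+2} = x_i⁻¹ x_{i+1} x_i`. -/
def xH : ℕ → FreeGroup HGen
  | 0 => FreeGroup.of HGen.x0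
  | 1 => FreeGroup.of HGen.x1
  | (i + 2) => (xH i)⁻¹ * xH (i + 1) * xH i

/-- The abbreviations `σ_i` (meaningful for `i ≥ 1`):
`σ_{i+1} = x_{i-1}⁻¹ σ_i x_i σ_i⁻¹`. -/
def sH : ℕ → FreeGroup HGen
  | 0 => 1
  | 1 => FreeGroup.of HGen.s1
  | (i + 2) => (xH i)⁻¹ * sH (i + 1) * xH (i + 1) * (sH (i + 1))⁻¹

/-- The abbreviations `τ_i` (meaningful for `i ≥ 1`):
`τ_{i+1} = x_{i-1}⁻¹ τ_i σ_i⁻¹`. -/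
def tH : ℕ → FreeGroup HGen
  | 0 => 1
  | 1 => FreeGroup.of HGen.t1
  | (i + 2) => (xH i)⁻¹ * tH (i + 1) * (sH (i + 1))⁻¹

/-- The 18 defining relators of `H`. -/
def hRels : Set (FreeGroup HGen) :=
  { grel (xH 2 * xH 0) (xH 0 * xH 3),
    grel (xH 3 * xH 1) (xH 1 * xH 4),
    grel (sH 1 * xH 2) (xH 2 * sH 1),
    grel (sH 1 * xH 3) (xH 3 * sH 1),
    grel (sH 2 * xH 3) (xH 3 * sH 2),
    grel (sH 2 * xH 4) (xH 4 * sH 2),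
    grel (sH 2 * xH 0) (xH 0 * sH 3),
    grel (sH 3 * xH 1) (xH 1 * sH 4),
    grel (sH 1 * xH 0) (xH 1 * sH 1 * sH 2),
    grel (sH 2 * xH 1) (xH 2 * sH 2 * sH 3),
    grel (tH 2 * xH 0) (xH 0 * tH 3),
    grel (tH 3 * xH 1) (xH 1 * tH 4),
    grel (tH 1 * xH 0) (sH 1 * tH 2),
    grel (tH 2 * xH 1) (sH 2 * tH 3),
    grel (sH 1 * sH 3) (sH 3 * sH 1),
    grel (sH 1 * sH 2 * sH 1) (sH 2 * sH 1 * sH 2),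
    grel (sH 1 * tH 3) (tH 3 * sH 1),
    grel (sH 1 * tH 2 * sH 1) (tH 2 * sH 1 * tH 2) }

/-- The finitely presented group `H` (4 generators, 18 relators). -/
abbrev HGrp : Type := PresentedGroup hRels

/-! ### Auxiliary development -/

namespace HBV

variable {G : Type*} [Group G]

lemma conj_mul' {a b c : G} (h : b⁻¹ * a * b = c) : a * b = b * c := by
  rw [← h]; group

lemma comm_conj {g a b : G} (h : a * b = b * a) :
    (g⁻¹ * a * g) * (g⁻¹ * b * g) = (g⁻¹ * b * g) * (g⁻¹ * a * g) := by
  calc (g⁻¹ * a * g) * (g⁻¹ * b * g) = g⁻¹ * (a * b) * g := by group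
    _ = g⁻¹ * (b * a) * g := by rw [h]
    _ = (g⁻¹ * b * g) * (g⁻¹ * a * g) := by group

lemma braid_conj {g a b : G} (h : a * b * a = b * a * b) :
    (g⁻¹ * a * g) * (g⁻¹ * b * g) * (g⁻¹ * a * g)
      = (g⁻¹ * b * g) * (g⁻¹ * a * g) * (g⁻¹ * b * g) := by
  calc (g⁻¹ * a * g) * (g⁻¹ * b * g) * (g⁻¹ * a * g) = g⁻¹ * (a * b * a) * g := by group
    _ = g⁻¹ * (b * a * b) * g := by rw [h]
    _ = (g⁻¹ * b * g) * (g⁻¹ * a * g) * (g⁻¹ * b * g) := by group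

lemma comm_mul {a b c : G} (h1 : a * b = b * a) (h2 : a * c = c * a) :
    a * (b * c) = (b * c) * a := by
  calc a * (b * c) = (a * b) * c := by group
    _ = (b * a) * c := by rw [h1]
    _ = b * (a * c) := by group
    _ = b * (c * a) := by rw [h2]
    _ = (b * c) * a := by group

lemma comm_inv {a b : G} (h : a * b = b * a) : a * b⁻¹ = b⁻¹ * a := by
  calc a * b⁻¹ = b⁻¹ * (b * a) * b⁻¹ := by group
    _ = b⁻¹ * (a * b) * b⁻¹ := by rw [h]
    _ = b⁻¹ * a := by group

/-! ### The group `H` side -/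

abbrev piH : FreeGroup HGen →* HGrp := PresentedGroup.mk hRels

def XX (i : ℕ) : HGrp := piH (xH i)
def SS (i : ℕ) : HGrp := piH (sH i)
def TT (i : ℕ) : HGrp := piH (tH i)

lemma req {u v : FreeGroup HGen} (h : grel u v ∈ hRels) : piH u = piH v := by
  have h1 : piH (grel u v) = 1 :=
    (QuotientGroup.eq_one_iff _).mpr (Subgroup.subset_normalClosure h)
  have h2 : piH u * (piH v)⁻¹ = 1 := by
    simpa [grel, map_mul, map_inv] using h1
  exact mul_inv_eq_one.mp h2

lemma defX (i : ℕ) : XX (i + 2) = (XX i)⁻¹ * XX (i + 1) * XX i := by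
  simp only [XX, xH, map_mul, map_inv]

lemma defS (i : ℕ) : SS (i + 2) = (XX i)⁻¹ * SS (i + 1) * XX (i + 1) * (SS (i + 1))⁻¹ := by
  simp only [XX, SS, sH, map_mul, map_inv]

lemma defT (i : ℕ) : TT (i + 2) = (XX i)⁻¹ * TT (i + 1) * (SS (i + 1))⁻¹ := by
  simp only [XX, SS, TT, tH, map_mul, map_inv]

/-- The eighteen relators, as equations in `HGrp`. -/
lemma r1 : XX 2 * XX 0 = XX 0 * XX 3 := by
  have h := req (u := xH 2 * xH 0) (v := xH 0 * xH 3) (Set.mem_insert _ _)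
  simp only [map_mul] at h; exact h

lemma r2 : XX 3 * XX 1 = XX 1 * XX 4 := by
  have h := req (u := xH 3 * xH 1) (v := xH 1 * xH 4)
    (Set.mem_insert_of_mem _ (Set.mem_insert _ _))
  simp only [map_mul] at h; exact h

lemma r3 : SS 1 * XX 2 = XX 2 * SS 1 := by
  have h := req (u := sH 1 * xH 2) (v := xH 2 * sH 1)
    (Set.mem_insert_of_mem _ (Set.mem_insert_of_mem _ (Set.mem_insert _ _)))
  simp only [map_mul] at h; exact h

lemma r4 : SS 1 * XX 3 = XX 3 * SS 1 := by
  have h := req (u := sH 1 * xH 3) (v := xH 3 * sH 1)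
    (Set.mem_insert_of_mem _ (Set.mem_insert_of_mem _ (Set.mem_insert_of_mem _
      (Set.mem_insert _ _))))
  simp only [map_mul] at h; exact h

lemma r5 : SS 2 * XX 3 = XX 3 * SS 2 := by
  have h := req (u := sH 2 * xH 3) (v := xH 3 * sH 2)
    (Set.mem_insert_of_mem _ (Set.mem_insert_of_mem _ (Set.mem_insert_of_mem _
      (Set.mem_insert_of_mem _ (Set.mem_insert _ _)))))
  simp only [map_mul] at h; exact h

lemma r6 : SS 2 * XX 4 = XX 4 * SS 2 := by
  have h := req (u := sH 2 * xH 4) (v := xH 4 * sH 2)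
    (Set.mem_insert_of_mem _ (Set.mem_insert_of_mem _ (Set.mem_insert_of_mem _
      (Set.mem_insert_of_mem _ (Set.mem_insert_of_mem _ (Set.mem_insert _ _))))))
  simp only [map_mul] at h; exact h

lemma r7 : SS 2 * XX 0 = XX 0 * SS 3 := by
  have h := req (u := sH 2 * xH 0) (v := xH 0 * sH 3)
    (Set.mem_insert_of_mem _ (Set.mem_insert_of_mem _ (Set.mem_insert_of_mem _
      (Set.mem_insert_of_mem _ (Set.mem_insert_of_mem _ (Set.mem_insert_of_mem _
      (Set.mem_insert _ _)))))))
  simp only [map_mul] at h; exact h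

lemma r8 : SS 3 * XX 1 = XX 1 * SS 4 := by
  have h := req (u := sH 3 * xH 1) (v := xH 1 * sH 4)
    (Set.mem_insert_of_mem _ (Set.mem_insert_of_mem _ (Set.mem_insert_of_mem _
      (Set.mem_insert_of_mem _ (Set.mem_insert_of_mem _ (Set.mem_insert_of_mem _
      (Set.mem_insert_of_mem _ (Set.mem_insert _ _))))))))
  simp only [map_mul] at h; exact h

lemma r9 : SS 1 * XX 0 = XX 1 * SS 1 * SS 2 := by
  have h := req (u := sH 1 * xH 0) (v := xH 1 * sH 1 * sH 2)
    (Set.mem_insert_of_mem _ (Set.mem_insert_of_mem _ (Set.mem_insert_of_mem _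
      (Set.mem_insert_of_mem _ (Set.mem_insert_of_mem _ (Set.mem_insert_of_mem _
      (Set.mem_insert_of_mem _ (Set.mem_insert_of_mem _ (Set.mem_insert _ _)))))))))
  simp only [map_mul] at h; exact h

lemma r10 : SS 2 * XX 1 = XX 2 * SS 2 * SS 3 := by
  have h := req (u := sH 2 * xH 1) (v := xH 2 * sH 2 * sH 3)
    (Set.mem_insert_of_mem _ (Set.mem_insert_of_mem _ (Set.mem_insert_of_mem _
      (Set.mem_insert_of_mem _ (Set.mem_insert_of_mem _ (Set.mem_insert_of_mem _
      (Set.mem_insert_of_mem _ (Set.mem_insert_of_mem _ (Set.mem_insert_of_mem _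
      (Set.mem_insert _ _))))))))))
  simp only [map_mul] at h; exact h

lemma r11 : TT 2 * XX 0 = XX 0 * TT 3 := by
  have h := req (u := tH 2 * xH 0) (v := xH 0 * tH 3)
    (Set.mem_insert_of_mem _ (Set.mem_insert_of_mem _ (Set.mem_insert_of_mem _
      (Set.mem_insert_of_mem _ (Set.mem_insert_of_mem _ (Set.mem_insert_of_mem _
      (Set.mem_insert_of_mem _ (Set.mem_insert_of_mem _ (Set.mem_insert_of_mem _
      (Set.mem_insert_of_mem _ (Set.mem_insert _ _)))))))))))
  simp only [map_mul] at h; exact h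

lemma r12 : TT 3 * XX 1 = XX 1 * TT 4 := by
  have h := req (u := tH 3 * xH 1) (v := xH 1 * tH 4)
    (Set.mem_insert_of_mem _ (Set.mem_insert_of_mem _ (Set.mem_insert_of_mem _
      (Set.mem_insert_of_mem _ (Set.mem_insert_of_mem _ (Set.mem_insert_of_mem _
      (Set.mem_insert_of_mem _ (Set.mem_insert_of_mem _ (Set.mem_insert_of_mem _
      (Set.mem_insert_of_mem _ (Set.mem_insert_of_mem _ (Set.mem_insert _ _))))))))))))
  simp only [map_mul] at h; exact h

lemma r13 : TT 1 * XX 0 = SS 1 * TT 2 := by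
  have h := req (u := tH 1 * xH 0) (v := sH 1 * tH 2)
    (Set.mem_insert_of_mem _ (Set.mem_insert_of_mem _ (Set.mem_insert_of_mem _
      (Set.mem_insert_of_mem _ (Set.mem_insert_of_mem _ (Set.mem_insert_of_mem _
      (Set.mem_insert_of_mem _ (Set.mem_insert_of_mem _ (Set.mem_insert_of_mem _
      (Set.mem_insert_of_mem _ (Set.mem_insert_of_mem _ (Set.mem_insert_of_mem _
      (Set.mem_insert _ _)))))))))))))
  simp only [map_mul] at h; exact h

lemma r14 : TT 2 * XX 1 = SS 2 * TT 3 := by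
  have h := req (u := tH 2 * xH 1) (v := sH 2 * tH 3)
    (Set.mem_insert_of_mem _ (Set.mem_insert_of_mem _ (Set.mem_insert_of_mem _
      (Set.mem_insert_of_mem _ (Set.mem_insert_of_mem _ (Set.mem_insert_of_mem _
      (Set.mem_insert_of_mem _ (Set.mem_insert_of_mem _ (Set.mem_insert_of_mem _
      (Set.mem_insert_of_mem _ (Set.mem_insert_of_mem _ (Set.mem_insert_of_mem _
      (Set.mem_insert_of_mem _ (Set.mem_insert _ _))))))))))))))
  simp only [map_mul] at h; exact h

lemma r15 : SS 1 * SS 3 = SS 3 * SS 1 := by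
  have h := req (u := sH 1 * sH 3) (v := sH 3 * sH 1)
    (Set.mem_insert_of_mem _ (Set.mem_insert_of_mem _ (Set.mem_insert_of_mem _
      (Set.mem_insert_of_mem _ (Set.mem_insert_of_mem _ (Set.mem_insert_of_mem _
      (Set.mem_insert_of_mem _ (Set.mem_insert_of_mem _ (Set.mem_insert_of_mem _
      (Set.mem_insert_of_mem _ (Set.mem_insert_of_mem _ (Set.mem_insert_of_mem _
      (Set.mem_insert_of_mem _ (Set.mem_insert_of_mem _ (Set.mem_insert _ _)))))))))))))))
  simp only [map_mul] at h; exact h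

lemma r16 : SS 1 * SS 2 * SS 1 = SS 2 * SS 1 * SS 2 := by
  have h := req (u := sH 1 * sH 2 * sH 1) (v := sH 2 * sH 1 * sH 2)
    (Set.mem_insert_of_mem _ (Set.mem_insert_of_mem _ (Set.mem_insert_of_mem _
      (Set.mem_insert_of_mem _ (Set.mem_insert_of_mem _ (Set.mem_insert_of_mem _
      (Set.mem_insert_of_mem _ (Set.mem_insert_of_mem _ (Set.mem_insert_of_mem _
      (Set.mem_insert_of_mem _ (Set.mem_insert_of_mem _ (Set.mem_insert_of_mem _
      (Set.mem_insert_of_mem _ (Set.mem_insert_of_mem _ (Set.mem_insert_of_mem _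
      (Set.mem_insert _ _))))))))))))))))
  simp only [map_mul] at h; exact h

lemma r17 : SS 1 * TT 3 = TT 3 * SS 1 := by
  have h := req (u := sH 1 * tH 3) (v := tH 3 * sH 1)
    (Set.mem_insert_of_mem _ (Set.mem_insert_of_mem _ (Set.mem_insert_of_mem _
      (Set.mem_insert_of_mem _ (Set.mem_insert_of_mem _ (Set.mem_insert_of_mem _
      (Set.mem_insert_of_mem _ (Set.mem_insert_of_mem _ (Set.mem_insert_of_mem _
      (Set.mem_insert_of_mem _ (Set.mem_insert_of_mem _ (Set.mem_insert_of_mem _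
      (Set.mem_insert_of_mem _ (Set.mem_insert_of_mem _ (Set.mem_insert_of_mem _
      (Set.mem_insert_of_mem _ (Set.mem_insert _ _)))))))))))))))))
  simp only [map_mul] at h; exact h

lemma r18 : SS 1 * TT 2 * SS 1 = TT 2 * SS 1 * TT 2 := by
  have h := req (u := sH 1 * tH 2 * sH 1) (v := tH 2 * sH 1 * tH 2)
    (Set.mem_insert_of_mem _ (Set.mem_insert_of_mem _ (Set.mem_insert_of_mem _
      (Set.mem_insert_of_mem _ (Set.mem_insert_of_mem _ (Set.mem_insert_of_mem _
      (Set.mem_insert_of_mem _ (Set.mem_insert_of_mem _ (Set.mem_insert_of_mem _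
      (Set.mem_insert_of_mem _ (Set.mem_insert_of_mem _ (Set.mem_insert_of_mem _
      (Set.mem_insert_of_mem _ (Set.mem_insert_of_mem _ (Set.mem_insert_of_mem _
      (Set.mem_insert_of_mem _ (Set.mem_insert_of_mem _ (Set.mem_singleton _))))))))))))))))))
  simp only [map_mul] at h; exact h

end HBV

namespace HBV

/-! ### Conjugation ("shift") lemmas -/

theorem cX : ∀ k : ℕ, 1 ≤ k → (XX 0)⁻¹ * XX k * XX 0 = XX (k + 1)
  | 0, h => absurd h (by omega)
  | 1, _ => (defX 0).symm
  | 2, _ => by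
      calc (XX 0)⁻¹ * XX 2 * XX 0 = (XX 0)⁻¹ * (XX 2 * XX 0) := by group
        _ = (XX 0)⁻¹ * (XX 0 * XX 3) := by rw [r1]
        _ = XX 3 := by group
  | (n+3), _ => by
      have h1 : (XX 0)⁻¹ * XX (n+1) * XX 0 = XX (n+2) := cX (n+1) (by omega)
      have h2 : (XX 0)⁻¹ * XX (n+2) * XX 0 = XX (n+3) := cX (n+2) (by omega)
      calc (XX 0)⁻¹ * XX (n+3) * XX 0
          = ((XX 0)⁻¹ * XX (n+1) * XX 0)⁻¹ * ((XX 0)⁻¹ * XX (n+2) * XX 0) *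
            ((XX 0)⁻¹ * XX (n+1) * XX 0) := by
            rw [(defX (n+1) : XX (n+3) = (XX (n+1))⁻¹ * XX (n+2) * XX (n+1))]; group
        _ = (XX (n+2))⁻¹ * XX (n+3) * XX (n+2) := by rw [h1, h2]
        _ = XX (n+4) := (defX (n+2) : XX (n+4) = _).symm

theorem dX : ∀ k : ℕ, 2 ≤ k → (XX 1)⁻¹ * XX k * XX 1 = XX (k + 1)
  | 0, h => absurd h (by omega)
  | 1, h => absurd h (by omega)
  | 2, _ => (defX 1 : XX 3 = _).symm
  | 3, _ => by
      calc (XX 1)⁻¹ * XX 3 * XX 1 = (XX 1)⁻¹ * (XX 3 * XX 1) := by group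
        _ = (XX 1)⁻¹ * (XX 1 * XX 4) := by rw [r2]
        _ = XX 4 := by group
  | (n+4), _ => by
      have h1 : (XX 1)⁻¹ * XX (n+2) * XX 1 = XX (n+3) := dX (n+2) (by omega)
      have h2 : (XX 1)⁻¹ * XX (n+3) * XX 1 = XX (n+4) := dX (n+3) (by omega)
      calc (XX 1)⁻¹ * XX (n+4) * XX 1
          = ((XX 1)⁻¹ * XX (n+2) * XX 1)⁻¹ * ((XX 1)⁻¹ * XX (n+3) * XX 1) *
            ((XX 1)⁻¹ * XX (n+2) * XX 1) := by
            rw [(defX (n+2) : XX (n+4) = (XX (n+2))⁻¹ * XX (n+3) * XX (n+2))]; group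
        _ = (XX (n+3))⁻¹ * XX (n+4) * XX (n+3) := by rw [h1, h2]
        _ = XX (n+5) := (defX (n+3) : XX (n+5) = _).symm

theorem aX : ∀ i j : ℕ, i < j → (XX i)⁻¹ * XX j * XX i = XX (j + 1)
  | 0, j, h => cX j (by omega)
  | 1, j, h => dX j (by omega)
  | (m+2), j, h => by
      obtain ⟨k, rfl⟩ : ∃ k, j = k + 1 := ⟨j - 1, by omega⟩
      have h1 : (XX 0)⁻¹ * XX (m+1) * XX 0 = XX (m+2) := cX (m+1) (by omega)
      have h2 : (XX 0)⁻¹ * XX k * XX 0 = XX (k+1) := cX k (by omega)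
      have h3 : (XX (m+1))⁻¹ * XX k * XX (m+1) = XX (k+1) := aX (m+1) k (by omega)
      have h4 : (XX 0)⁻¹ * XX (k+1) * XX 0 = XX (k+2) := cX (k+1) (by omega)
      calc (XX (m+2))⁻¹ * XX (k+1) * XX (m+2)
          = ((XX 0)⁻¹ * XX (m+1) * XX 0)⁻¹ * ((XX 0)⁻¹ * XX k * XX 0) *
            ((XX 0)⁻¹ * XX (m+1) * XX 0) := by rw [h1, h2]
        _ = (XX 0)⁻¹ * ((XX (m+1))⁻¹ * XX k * XX (m+1)) * XX 0 := by group
        _ = (XX 0)⁻¹ * XX (k+1) * XX 0 := by rw [h3]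
        _ = XX (k+2) := h4

theorem hA (i j : ℕ) (h : i < j) : XX j * XX i = XX i * XX (j + 1) :=
  conj_mul' (aX i j h)

theorem cS : ∀ k : ℕ, 2 ≤ k → (XX 0)⁻¹ * SS k * XX 0 = SS (k + 1)
  | 0, h => absurd h (by omega)
  | 1, h => absurd h (by omega)
  | 2, _ => by
      calc (XX 0)⁻¹ * SS 2 * XX 0 = (XX 0)⁻¹ * (SS 2 * XX 0) := by group
        _ = (XX 0)⁻¹ * (XX 0 * SS 3) := by rw [r7]
        _ = SS 3 := by group
  | (n+3), _ => by
      have h1 : (XX 0)⁻¹ * XX (n+1) * XX 0 = XX (n+2) := cX (n+1) (by omega)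
      have h2 : (XX 0)⁻¹ * SS (n+2) * XX 0 = SS (n+3) := cS (n+2) (by omega)
      have h3 : (XX 0)⁻¹ * XX (n+2) * XX 0 = XX (n+3) := cX (n+2) (by omega)
      calc (XX 0)⁻¹ * SS (n+3) * XX 0
          = ((XX 0)⁻¹ * XX (n+1) * XX 0)⁻¹ * ((XX 0)⁻¹ * SS (n+2) * XX 0) *
            ((XX 0)⁻¹ * XX (n+2) * XX 0) * ((XX 0)⁻¹ * SS (n+2) * XX 0)⁻¹ := by
            rw [(defS (n+1) : SS (n+3) = (XX (n+1))⁻¹ * SS (n+2) * XX (n+2) * (SS (n+2))⁻¹)]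
            group
        _ = (XX (n+2))⁻¹ * SS (n+3) * XX (n+3) * (SS (n+3))⁻¹ := by rw [h1, h2, h3]
        _ = SS (n+4) := (defS (n+2) : SS (n+4) = _).symm

theorem dS : ∀ k : ℕ, 3 ≤ k → (XX 1)⁻¹ * SS k * XX 1 = SS (k + 1)
  | 0, h => absurd h (by omega)
  | 1, h => absurd h (by omega)
  | 2, h => absurd h (by omega)
  | 3, _ => by
      calc (XX 1)⁻¹ * SS 3 * XX 1 = (XX 1)⁻¹ * (SS 3 * XX 1) := by group
        _ = (XX 1)⁻¹ * (XX 1 * SS 4) := by rw [r8]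
        _ = SS 4 := by group
  | (n+4), _ => by
      have h1 : (XX 1)⁻¹ * XX (n+2) * XX 1 = XX (n+3) := dX (n+2) (by omega)
      have h2 : (XX 1)⁻¹ * SS (n+3) * XX 1 = SS (n+4) := dS (n+3) (by omega)
      have h3 : (XX 1)⁻¹ * XX (n+3) * XX 1 = XX (n+4) := dX (n+3) (by omega)
      calc (XX 1)⁻¹ * SS (n+4) * XX 1
          = ((XX 1)⁻¹ * XX (n+2) * XX 1)⁻¹ * ((XX 1)⁻¹ * SS (n+3) * XX 1) *
            ((XX 1)⁻¹ * XX (n+3) * XX 1) * ((XX 1)⁻¹ * SS (n+3) * XX 1)⁻¹ := by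
            rw [(defS (n+2) : SS (n+4) = (XX (n+2))⁻¹ * SS (n+3) * XX (n+3) * (SS (n+3))⁻¹)]
            group
        _ = (XX (n+3))⁻¹ * SS (n+4) * XX (n+4) * (SS (n+4))⁻¹ := by rw [h1, h2, h3]
        _ = SS (n+5) := (defS (n+3) : SS (n+5) = _).symm

theorem cT : ∀ k : ℕ, 2 ≤ k → (XX 0)⁻¹ * TT k * XX 0 = TT (k + 1)
  | 0, h => absurd h (by omega)
  | 1, h => absurd h (by omega)
  | 2, _ => by
      calc (XX 0)⁻¹ * TT 2 * XX 0 = (XX 0)⁻¹ * (TT 2 * XX 0) := by group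
        _ = (XX 0)⁻¹ * (XX 0 * TT 3) := by rw [r11]
        _ = TT 3 := by group
  | (n+3), _ => by
      have h1 : (XX 0)⁻¹ * XX (n+1) * XX 0 = XX (n+2) := cX (n+1) (by omega)
      have h2 : (XX 0)⁻¹ * TT (n+2) * XX 0 = TT (n+3) := cT (n+2) (by omega)
      have h3 : (XX 0)⁻¹ * SS (n+2) * XX 0 = SS (n+3) := cS (n+2) (by omega)
      calc (XX 0)⁻¹ * TT (n+3) * XX 0
          = ((XX 0)⁻¹ * XX (n+1) * XX 0)⁻¹ * ((XX 0)⁻¹ * TT (n+2) * XX 0) *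
            ((XX 0)⁻¹ * SS (n+2) * XX 0)⁻¹ := by
            rw [(defT (n+1) : TT (n+3) = (XX (n+1))⁻¹ * TT (n+2) * (SS (n+2))⁻¹)]
            group
        _ = (XX (n+2))⁻¹ * TT (n+3) * (SS (n+3))⁻¹ := by rw [h1, h2, h3]
        _ = TT (n+4) := (defT (n+2) : TT (n+4) = _).symm

theorem dT : ∀ k : ℕ, 3 ≤ k → (XX 1)⁻¹ * TT k * XX 1 = TT (k + 1)
  | 0, h => absurd h (by omega)
  | 1, h => absurd h (by omega)
  | 2, h => absurd h (by omega)
  | 3, _ => by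
      calc (XX 1)⁻¹ * TT 3 * XX 1 = (XX 1)⁻¹ * (TT 3 * XX 1) := by group
        _ = (XX 1)⁻¹ * (XX 1 * TT 4) := by rw [r12]
        _ = TT 4 := by group
  | (n+4), _ => by
      have h1 : (XX 1)⁻¹ * XX (n+2) * XX 1 = XX (n+3) := dX (n+2) (by omega)
      have h2 : (XX 1)⁻¹ * TT (n+3) * XX 1 = TT (n+4) := dT (n+3) (by omega)
      have h3 : (XX 1)⁻¹ * SS (n+3) * XX 1 = SS (n+4) := dS (n+3) (by omega)
      calc (XX 1)⁻¹ * TT (n+4) * XX 1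
          = ((XX 1)⁻¹ * XX (n+2) * XX 1)⁻¹ * ((XX 1)⁻¹ * TT (n+3) * XX 1) *
            ((XX 1)⁻¹ * SS (n+3) * XX 1)⁻¹ := by
            rw [(defT (n+2) : TT (n+4) = (XX (n+2))⁻¹ * TT (n+3) * (SS (n+3))⁻¹)]
            group
        _ = (XX (n+3))⁻¹ * TT (n+4) * (SS (n+4))⁻¹ := by rw [h1, h2, h3]
        _ = TT (n+5) := (defT (n+3) : TT (n+5) = _).symm

end HBV

namespace HBV

/-! ### The C and D relations -/

theorem s1x : ∀ j : ℕ, 2 ≤ j → SS 1 * XX j = XX j * SS 1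
  | 0, h => absurd h (by omega)
  | 1, h => absurd h (by omega)
  | 2, _ => r3
  | 3, _ => r4
  | (n+4), _ => by
      have c1 : SS 1 * XX (n+2) = XX (n+2) * SS 1 := s1x (n+2) (by omega)
      have c2 : SS 1 * XX (n+3) = XX (n+3) * SS 1 := s1x (n+3) (by omega)
      rw [(defX (n+2) : XX (n+4) = (XX (n+2))⁻¹ * XX (n+3) * XX (n+2))]
      exact comm_mul (comm_mul (comm_inv c1) c2) c1

theorem s2x : ∀ j : ℕ, 3 ≤ j → SS 2 * XX j = XX j * SS 2
  | 0, h => absurd h (by omega)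
  | 1, h => absurd h (by omega)
  | 2, h => absurd h (by omega)
  | 3, _ => r5
  | 4, _ => r6
  | (n+5), _ => by
      have c1 : SS 2 * XX (n+3) = XX (n+3) * SS 2 := s2x (n+3) (by omega)
      have c2 : SS 2 * XX (n+4) = XX (n+4) * SS 2 := s2x (n+4) (by omega)
      rw [(defX (n+3) : XX (n+5) = (XX (n+3))⁻¹ * XX (n+4) * XX (n+3))]
      exact comm_mul (comm_mul (comm_inv c1) c2) c1

theorem hC1 : ∀ i j : ℕ, 1 ≤ i → i < j → SS i * XX j = XX j * SS i
  | 0, j, h, _ => absurd h (by omega)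
  | 1, j, _, h => s1x j (by omega)
  | 2, j, _, h => s2x j (by omega)
  | (m+3), j, _, h => by
      obtain ⟨k, rfl⟩ : ∃ k, j = k + 1 := ⟨j - 1, by omega⟩
      have e1 : (XX 0)⁻¹ * SS (m+2) * XX 0 = SS (m+3) := cS (m+2) (by omega)
      have e2 : (XX 0)⁻¹ * XX k * XX 0 = XX (k+1) := cX k (by omega)
      rw [← e1, ← e2]
      exact comm_conj (hC1 (m+2) k (by omega) (by omega))

theorem sxC3 : ∀ j i : ℕ, j + 2 ≤ i → (XX j)⁻¹ * SS i * XX j = SS (i + 1)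
  | 0, i, h => cS i (by omega)
  | 1, i, h => dS i (by omega)
  | (m+2), i, h => by
      obtain ⟨k, rfl⟩ : ∃ k, i = k + 1 := ⟨i - 1, by omega⟩
      have h1 : (XX 0)⁻¹ * XX (m+1) * XX 0 = XX (m+2) := cX (m+1) (by omega)
      have h2 : (XX 0)⁻¹ * SS k * XX 0 = SS (k+1) := cS k (by omega)
      have h3 : (XX (m+1))⁻¹ * SS k * XX (m+1) = SS (k+1) := sxC3 (m+1) k (by omega)
      have h4 : (XX 0)⁻¹ * SS (k+1) * XX 0 = SS (k+2) := cS (k+1) (by omega)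
      calc (XX (m+2))⁻¹ * SS (k+1) * XX (m+2)
          = ((XX 0)⁻¹ * XX (m+1) * XX 0)⁻¹ * ((XX 0)⁻¹ * SS k * XX 0) *
            ((XX 0)⁻¹ * XX (m+1) * XX 0) := by rw [h1, h2]
        _ = (XX 0)⁻¹ * ((XX (m+1))⁻¹ * SS k * XX (m+1)) * XX 0 := by group
        _ = (XX 0)⁻¹ * SS (k+1) * XX 0 := by rw [h3]
        _ = SS (k+2) := h4

theorem hC3 (i j : ℕ) (h : j + 2 ≤ i) : SS i * XX j = XX j * SS (i + 1) :=
  conj_mul' (sxC3 j i h)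

theorem txD1' : ∀ j i : ℕ, j + 2 ≤ i → (XX j)⁻¹ * TT i * XX j = TT (i + 1)
  | 0, i, h => cT i (by omega)
  | 1, i, h => dT i (by omega)
  | (m+2), i, h => by
      obtain ⟨k, rfl⟩ : ∃ k, i = k + 1 := ⟨i - 1, by omega⟩
      have h1 : (XX 0)⁻¹ * XX (m+1) * XX 0 = XX (m+2) := cX (m+1) (by omega)
      have h2 : (XX 0)⁻¹ * TT k * XX 0 = TT (k+1) := cT k (by omega)
      have h3 : (XX (m+1))⁻¹ * TT k * XX (m+1) = TT (k+1) := txD1' (m+1) k (by omega)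
      have h4 : (XX 0)⁻¹ * TT (k+1) * XX 0 = TT (k+2) := cT (k+1) (by omega)
      calc (XX (m+2))⁻¹ * TT (k+1) * XX (m+2)
          = ((XX 0)⁻¹ * XX (m+1) * XX 0)⁻¹ * ((XX 0)⁻¹ * TT k * XX 0) *
            ((XX 0)⁻¹ * XX (m+1) * XX 0) := by rw [h1, h2]
        _ = (XX 0)⁻¹ * ((XX (m+1))⁻¹ * TT k * XX (m+1)) * XX 0 := by group
        _ = (XX 0)⁻¹ * TT (k+1) * XX 0 := by rw [h3]
        _ = TT (k+2) := h4

theorem hD1 (i j : ℕ) (h : j + 2 ≤ i) : TT i * XX j = XX j * TT (i + 1) :=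
  conj_mul' (txD1' j i h)

theorem hC2 : ∀ i : ℕ, 1 ≤ i → SS i * XX i = XX (i - 1) * SS (i + 1) * SS i
  | 0, h => absurd h (by omega)
  | (m+1), _ => by
      show SS (m+1) * XX (m+1) = XX m * SS (m+2) * SS (m+1)
      rw [(defS m : SS (m+2) = (XX m)⁻¹ * SS (m+1) * XX (m+1) * (SS (m+1))⁻¹)]
      group

theorem hD3 : ∀ i : ℕ, 1 ≤ i → TT i = XX (i - 1) * TT (i + 1) * SS i
  | 0, h => absurd h (by omega)
  | (m+1), _ => by
      show TT (m+1) = XX m * TT (m+2) * SS (m+1)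
      rw [(defT m : TT (m+2) = (XX m)⁻¹ * TT (m+1) * (SS (m+1))⁻¹)]
      group

theorem hC4 : ∀ i : ℕ, SS (i+1) * XX i = XX (i+1) * SS (i+1) * SS (i+2)
  | 0 => r9
  | 1 => r10
  | (m+2) => by
      have ih : SS (m+2) * XX (m+1) = XX (m+2) * SS (m+2) * SS (m+3) := hC4 (m+1)
      have e1 : (XX 0)⁻¹ * XX (m+1) * XX 0 = XX (m+2) := cX (m+1) (by omega)
      have e2 : (XX 0)⁻¹ * XX (m+2) * XX 0 = XX (m+3) := cX (m+2) (by omega)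
      have e3 : (XX 0)⁻¹ * SS (m+2) * XX 0 = SS (m+3) := cS (m+2) (by omega)
      have e4 : (XX 0)⁻¹ * SS (m+3) * XX 0 = SS (m+4) := cS (m+3) (by omega)
      show SS (m+3) * XX (m+2) = XX (m+3) * SS (m+3) * SS (m+4)
      rw [← e3, ← e1, ← e2, ← e4]
      calc ((XX 0)⁻¹ * SS (m+2) * XX 0) * ((XX 0)⁻¹ * XX (m+1) * XX 0)
          = (XX 0)⁻¹ * (SS (m+2) * XX (m+1)) * XX 0 := by group
        _ = (XX 0)⁻¹ * (XX (m+2) * SS (m+2) * SS (m+3)) * XX 0 := by rw [ih]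
        _ = ((XX 0)⁻¹ * XX (m+2) * XX 0) * ((XX 0)⁻¹ * SS (m+2) * XX 0) *
            ((XX 0)⁻¹ * SS (m+3) * XX 0) := by group

theorem hD2 : ∀ i : ℕ, 1 ≤ i → TT i * XX (i - 1) = SS i * TT (i + 1)
  | 0, h => absurd h (by omega)
  | 1, _ => r13
  | 2, _ => r14
  | (m+3), _ => by
      have ih : TT (m+2) * XX (m+1) = SS (m+2) * TT (m+3) := hD2 (m+2) (by omega)
      have e1 : (XX 0)⁻¹ * TT (m+2) * XX 0 = TT (m+3) := cT (m+2) (by omega)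
      have e2 : (XX 0)⁻¹ * XX (m+1) * XX 0 = XX (m+2) := cX (m+1) (by omega)
      have e3 : (XX 0)⁻¹ * SS (m+2) * XX 0 = SS (m+3) := cS (m+2) (by omega)
      have e4 : (XX 0)⁻¹ * TT (m+3) * XX 0 = TT (m+4) := cT (m+3) (by omega)
      show TT (m+3) * XX (m+2) = SS (m+3) * TT (m+4)
      rw [← e1, ← e2, ← e3, ← e4]
      calc ((XX 0)⁻¹ * TT (m+2) * XX 0) * ((XX 0)⁻¹ * XX (m+1) * XX 0)
          = (XX 0)⁻¹ * (TT (m+2) * XX (m+1)) * XX 0 := by group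
        _ = (XX 0)⁻¹ * (SS (m+2) * TT (m+3)) * XX 0 := by rw [ih]
        _ = ((XX 0)⁻¹ * SS (m+2) * XX 0) * ((XX 0)⁻¹ * TT (m+3) * XX 0) := by group

end HBV

namespace HBV

/-! ### The B relations -/

theorem s1s : ∀ j : ℕ, 3 ≤ j → SS 1 * SS j = SS j * SS 1
  | 0, h => absurd h (by omega)
  | 1, h => absurd h (by omega)
  | 2, h => absurd h (by omega)
  | 3, _ => r15
  | (n+4), _ => by
      have c1 : SS 1 * XX (n+2) = XX (n+2) * SS 1 := s1x (n+2) (by omega)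
      have c2 : SS 1 * SS (n+3) = SS (n+3) * SS 1 := s1s (n+3) (by omega)
      have c3 : SS 1 * XX (n+3) = XX (n+3) * SS 1 := s1x (n+3) (by omega)
      rw [(defS (n+2) : SS (n+4) = (XX (n+2))⁻¹ * SS (n+3) * XX (n+3) * (SS (n+3))⁻¹)]
      exact comm_mul (comm_mul (comm_mul (comm_inv c1) c2) c3) (comm_inv c2)

theorem s1t : ∀ j : ℕ, 3 ≤ j → SS 1 * TT j = TT j * SS 1
  | 0, h => absurd h (by omega)
  | 1, h => absurd h (by omega)
  | 2, h => absurd h (by omega)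
  | 3, _ => r17
  | (n+4), _ => by
      have c1 : SS 1 * XX (n+2) = XX (n+2) * SS 1 := s1x (n+2) (by omega)
      have c2 : SS 1 * TT (n+3) = TT (n+3) * SS 1 := s1t (n+3) (by omega)
      have c3 : SS 1 * SS (n+3) = SS (n+3) * SS 1 := s1s (n+3) (by omega)
      rw [(defT (n+2) : TT (n+4) = (XX (n+2))⁻¹ * TT (n+3) * (SS (n+3))⁻¹)]
      exact comm_mul (comm_mul (comm_inv c1) c2) (comm_inv c3)

theorem s2s4 : SS 2 * SS 4 = SS 4 * SS 2 := by
  have e1 : SS 3 * XX 1 = XX 1 * SS 4 := conj_mul' (dS 3 (by omega))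
  have e2 : SS 1 * XX 1 = XX 0 * SS 2 * SS 1 := hC2 1 (by omega)
  have e3 : SS 3 * XX 0 = XX 0 * SS 4 := conj_mul' (cS 3 (by omega))
  have e4 : SS 1 * SS 4 = SS 4 * SS 1 := s1s 4 (by omega)
  have k1 : SS 1 * SS 3 * XX 1 = XX 0 * (SS 2 * SS 1 * SS 4) := by
    calc SS 1 * SS 3 * XX 1 = SS 1 * (SS 3 * XX 1) := by group
      _ = SS 1 * (XX 1 * SS 4) := by rw [e1]
      _ = (SS 1 * XX 1) * SS 4 := by group
      _ = (XX 0 * SS 2 * SS 1) * SS 4 := by rw [e2]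
      _ = XX 0 * (SS 2 * SS 1 * SS 4) := by group
  have k2 : SS 3 * SS 1 * XX 1 = XX 0 * (SS 4 * SS 2 * SS 1) := by
    calc SS 3 * SS 1 * XX 1 = SS 3 * (SS 1 * XX 1) := by group
      _ = SS 3 * (XX 0 * SS 2 * SS 1) := by rw [e2]
      _ = (SS 3 * XX 0) * (SS 2 * SS 1) := by group
      _ = (XX 0 * SS 4) * (SS 2 * SS 1) := by rw [e3]
      _ = XX 0 * (SS 4 * SS 2 * SS 1) := by group
  have k3 : XX 0 * (SS 2 * SS 1 * SS 4) = XX 0 * (SS 4 * SS 2 * SS 1) := by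
    rw [← k1, ← k2, r15]
  have k4 : SS 2 * SS 1 * SS 4 = SS 4 * SS 2 * SS 1 := mul_left_cancel k3
  have k5 : SS 2 * SS 4 * SS 1 = SS 4 * SS 2 * SS 1 := by
    calc SS 2 * SS 4 * SS 1 = SS 2 * (SS 4 * SS 1) := by group
      _ = SS 2 * (SS 1 * SS 4) := by rw [← e4]
      _ = SS 2 * SS 1 * SS 4 := by group
      _ = SS 4 * SS 2 * SS 1 := k4
  exact mul_right_cancel k5

theorem s2s : ∀ j : ℕ, 4 ≤ j → SS 2 * SS j = SS j * SS 2
  | 0, h => absurd h (by omega)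
  | 1, h => absurd h (by omega)
  | 2, h => absurd h (by omega)
  | 3, h => absurd h (by omega)
  | 4, _ => s2s4
  | (n+5), _ => by
      have c1 : SS 2 * XX (n+3) = XX (n+3) * SS 2 := s2x (n+3) (by omega)
      have c2 : SS 2 * SS (n+4) = SS (n+4) * SS 2 := s2s (n+4) (by omega)
      have c3 : SS 2 * XX (n+4) = XX (n+4) * SS 2 := s2x (n+4) (by omega)
      rw [(defS (n+3) : SS (n+5) = (XX (n+3))⁻¹ * SS (n+4) * XX (n+4) * (SS (n+4))⁻¹)]
      exact comm_mul (comm_mul (comm_mul (comm_inv c1) c2) c3) (comm_inv c2)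

theorem sB1 : ∀ i j : ℕ, 1 ≤ i → i + 2 ≤ j → SS i * SS j = SS j * SS i
  | 0, j, h, _ => absurd h (by omega)
  | 1, j, _, h => s1s j (by omega)
  | 2, j, _, h => s2s j (by omega)
  | (m+3), j, _, h => by
      obtain ⟨k, rfl⟩ : ∃ k, j = k + 1 := ⟨j - 1, by omega⟩
      have e1 : (XX 0)⁻¹ * SS (m+2) * XX 0 = SS (m+3) := cS (m+2) (by omega)
      have e2 : (XX 0)⁻¹ * SS k * XX 0 = SS (k+1) := cS k (by omega)
      rw [← e1, ← e2]
      exact comm_conj (sB1 (m+2) k (by omega) (by omega))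

theorem s2t4 : SS 2 * TT 4 = TT 4 * SS 2 := by
  have e1 : TT 3 * XX 1 = XX 1 * TT 4 := conj_mul' (dT 3 (by omega))
  have e2 : SS 1 * XX 1 = XX 0 * SS 2 * SS 1 := hC2 1 (by omega)
  have e3 : TT 3 * XX 0 = XX 0 * TT 4 := conj_mul' (cT 3 (by omega))
  have e4 : SS 1 * TT 4 = TT 4 * SS 1 := s1t 4 (by omega)
  have k1 : SS 1 * TT 3 * XX 1 = XX 0 * (SS 2 * SS 1 * TT 4) := by
    calc SS 1 * TT 3 * XX 1 = SS 1 * (TT 3 * XX 1) := by group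
      _ = SS 1 * (XX 1 * TT 4) := by rw [e1]
      _ = (SS 1 * XX 1) * TT 4 := by group
      _ = (XX 0 * SS 2 * SS 1) * TT 4 := by rw [e2]
      _ = XX 0 * (SS 2 * SS 1 * TT 4) := by group
  have k2 : TT 3 * SS 1 * XX 1 = XX 0 * (TT 4 * SS 2 * SS 1) := by
    calc TT 3 * SS 1 * XX 1 = TT 3 * (SS 1 * XX 1) := by group
      _ = TT 3 * (XX 0 * SS 2 * SS 1) := by rw [e2]
      _ = (TT 3 * XX 0) * (SS 2 * SS 1) := by group
      _ = (XX 0 * TT 4) * (SS 2 * SS 1) := by rw [e3]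
      _ = XX 0 * (TT 4 * SS 2 * SS 1) := by group
  have k3 : XX 0 * (SS 2 * SS 1 * TT 4) = XX 0 * (TT 4 * SS 2 * SS 1) := by
    rw [← k1, ← k2, r17]
  have k4 : SS 2 * SS 1 * TT 4 = TT 4 * SS 2 * SS 1 := mul_left_cancel k3
  have k5 : SS 2 * TT 4 * SS 1 = TT 4 * SS 2 * SS 1 := by
    calc SS 2 * TT 4 * SS 1 = SS 2 * (TT 4 * SS 1) := by group
      _ = SS 2 * (SS 1 * TT 4) := by rw [← e4]
      _ = SS 2 * SS 1 * TT 4 := by group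
      _ = TT 4 * SS 2 * SS 1 := k4
  exact mul_right_cancel k5

theorem s2t : ∀ j : ℕ, 4 ≤ j → SS 2 * TT j = TT j * SS 2
  | 0, h => absurd h (by omega)
  | 1, h => absurd h (by omega)
  | 2, h => absurd h (by omega)
  | 3, h => absurd h (by omega)
  | 4, _ => s2t4
  | (n+5), _ => by
      have c1 : SS 2 * XX (n+3) = XX (n+3) * SS 2 := s2x (n+3) (by omega)
      have c2 : SS 2 * TT (n+4) = TT (n+4) * SS 2 := s2t (n+4) (by omega)
      have c3 : SS 2 * SS (n+4) = SS (n+4) * SS 2 := s2s (n+4) (by omega)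
      rw [(defT (n+3) : TT (n+5) = (XX (n+3))⁻¹ * TT (n+4) * (SS (n+4))⁻¹)]
      exact comm_mul (comm_mul (comm_inv c1) c2) (comm_inv c3)

theorem sB3 : ∀ i j : ℕ, 1 ≤ i → i + 2 ≤ j → SS i * TT j = TT j * SS i
  | 0, j, h, _ => absurd h (by omega)
  | 1, j, _, h => s1t j (by omega)
  | 2, j, _, h => s2t j (by omega)
  | (m+3), j, _, h => by
      obtain ⟨k, rfl⟩ : ∃ k, j = k + 1 := ⟨j - 1, by omega⟩
      have e1 : (XX 0)⁻¹ * SS (m+2) * XX 0 = SS (m+3) := cS (m+2) (by omega)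
      have e2 : (XX 0)⁻¹ * TT k * XX 0 = TT (k+1) := cT k (by omega)
      rw [← e1, ← e2]
      exact comm_conj (sB3 (m+2) k (by omega) (by omega))

theorem s23 : SS 2 * SS 3 * SS 2 = SS 3 * SS 2 * SS 3 := by
  have e2 : SS 1 * XX 1 = XX 0 * SS 2 * SS 1 := hC2 1 (by omega)
  have e7 : SS 2 * XX 0 = XX 0 * SS 3 := r7
  have e8 : SS 2 * XX 2 = XX 1 * SS 3 * SS 2 := hC2 2 (by omega)
  have k1 : SS 1 * SS 2 * SS 1 * XX 1 = XX 1 * (SS 1 * SS 2 * SS 3 * SS 2 * SS 1) := by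
    calc SS 1 * SS 2 * SS 1 * XX 1 = SS 1 * SS 2 * (SS 1 * XX 1) := by group
      _ = SS 1 * SS 2 * (XX 0 * SS 2 * SS 1) := by rw [e2]
      _ = SS 1 * (SS 2 * XX 0) * (SS 2 * SS 1) := by group
      _ = SS 1 * (XX 0 * SS 3) * (SS 2 * SS 1) := by rw [e7]
      _ = (SS 1 * XX 0) * (SS 3 * SS 2 * SS 1) := by group
      _ = (XX 1 * SS 1 * SS 2) * (SS 3 * SS 2 * SS 1) := by rw [r9]
      _ = XX 1 * (SS 1 * SS 2 * SS 3 * SS 2 * SS 1) := by group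
  have k2 : SS 2 * SS 1 * SS 2 * XX 1 = XX 1 * (SS 3 * SS 2 * SS 1 * SS 2 * SS 3) := by
    calc SS 2 * SS 1 * SS 2 * XX 1 = SS 2 * SS 1 * (SS 2 * XX 1) := by group
      _ = SS 2 * SS 1 * (XX 2 * SS 2 * SS 3) := by rw [r10]
      _ = SS 2 * (SS 1 * XX 2) * (SS 2 * SS 3) := by group
      _ = SS 2 * (XX 2 * SS 1) * (SS 2 * SS 3) := by rw [r3]
      _ = (SS 2 * XX 2) * (SS 1 * SS 2 * SS 3) := by group
      _ = (XX 1 * SS 3 * SS 2) * (SS 1 * SS 2 * SS 3) := by rw [e8]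
      _ = XX 1 * (SS 3 * SS 2 * SS 1 * SS 2 * SS 3) := by group
  have k3 : XX 1 * (SS 1 * SS 2 * SS 3 * SS 2 * SS 1) = XX 1 * (SS 3 * SS 2 * SS 1 * SS 2 * SS 3) := by
    rw [← k1, ← k2, r16]
  have k4 : SS 1 * SS 2 * SS 3 * SS 2 * SS 1 = SS 3 * SS 2 * SS 1 * SS 2 * SS 3 :=
    mul_left_cancel k3
  have k7 : SS 1 * (SS 2 * SS 3 * SS 2) * SS 1 = SS 1 * (SS 3 * SS 2 * SS 3) * SS 1 := by
    calc SS 1 * (SS 2 * SS 3 * SS 2) * SS 1 = SS 1 * SS 2 * SS 3 * SS 2 * SS 1 := by group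
      _ = SS 3 * SS 2 * SS 1 * SS 2 * SS 3 := k4
      _ = SS 3 * (SS 2 * SS 1 * SS 2) * SS 3 := by group
      _ = SS 3 * (SS 1 * SS 2 * SS 1) * SS 3 := by rw [← r16]
      _ = SS 3 * SS 1 * SS 2 * (SS 1 * SS 3) := by group
      _ = SS 1 * SS 3 * SS 2 * (SS 1 * SS 3) := by rw [← r15]
      _ = SS 1 * SS 3 * SS 2 * (SS 3 * SS 1) := by nth_rewrite 2 [r15]; rfl
      _ = SS 1 * (SS 3 * SS 2 * SS 3) * SS 1 := by group
  exact mul_left_cancel (mul_right_cancel k7)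

theorem sB2 : ∀ i : ℕ, 1 ≤ i → SS i * SS (i+1) * SS i = SS (i+1) * SS i * SS (i+1)
  | 0, h => absurd h (by omega)
  | 1, _ => r16
  | 2, _ => s23
  | (m+3), _ => by
      have e1 : (XX 0)⁻¹ * SS (m+2) * XX 0 = SS (m+3) := cS (m+2) (by omega)
      have e2 : (XX 0)⁻¹ * SS (m+3) * XX 0 = SS (m+4) := cS (m+3) (by omega)
      show SS (m+3) * SS (m+4) * SS (m+3) = SS (m+4) * SS (m+3) * SS (m+4)
      rw [← e1, ← e2]
      exact braid_conj (sB2 (m+2) (by omega))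

theorem s2t3 : SS 2 * TT 3 * SS 2 = TT 3 * SS 2 * TT 3 := by
  have e2 : SS 1 * XX 1 = XX 0 * SS 2 * SS 1 := hC2 1 (by omega)
  have d2 : TT 2 = XX 1 * TT 3 * SS 2 := hD3 2 (by omega)
  have k1 : SS 1 * TT 2 * SS 1 * XX 1 = XX 1 * (SS 1 * SS 2 * TT 3 * SS 2 * SS 1) := by
    calc SS 1 * TT 2 * SS 1 * XX 1 = SS 1 * TT 2 * (SS 1 * XX 1) := by group
      _ = SS 1 * TT 2 * (XX 0 * SS 2 * SS 1) := by rw [e2]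
      _ = SS 1 * (TT 2 * XX 0) * (SS 2 * SS 1) := by group
      _ = SS 1 * (XX 0 * TT 3) * (SS 2 * SS 1) := by rw [r11]
      _ = (SS 1 * XX 0) * (TT 3 * SS 2 * SS 1) := by group
      _ = (XX 1 * SS 1 * SS 2) * (TT 3 * SS 2 * SS 1) := by rw [r9]
      _ = XX 1 * (SS 1 * SS 2 * TT 3 * SS 2 * SS 1) := by group
  have k2 : TT 2 * SS 1 * TT 2 * XX 1 = XX 1 * (TT 3 * SS 2 * SS 1 * SS 2 * TT 3) := by
    calc TT 2 * SS 1 * TT 2 * XX 1 = TT 2 * SS 1 * (TT 2 * XX 1) := by group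
      _ = TT 2 * SS 1 * (SS 2 * TT 3) := by rw [r14]
      _ = TT 2 * (SS 1 * SS 2 * TT 3) := by group
      _ = (XX 1 * TT 3 * SS 2) * (SS 1 * SS 2 * TT 3) := by rw [d2]
      _ = XX 1 * (TT 3 * SS 2 * SS 1 * SS 2 * TT 3) := by group
  have k3 : XX 1 * (SS 1 * SS 2 * TT 3 * SS 2 * SS 1) = XX 1 * (TT 3 * SS 2 * SS 1 * SS 2 * TT 3) := by
    rw [← k1, ← k2, r18]
  have k4 : SS 1 * SS 2 * TT 3 * SS 2 * SS 1 = TT 3 * SS 2 * SS 1 * SS 2 * TT 3 :=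
    mul_left_cancel k3
  have k7 : SS 1 * (SS 2 * TT 3 * SS 2) * SS 1 = SS 1 * (TT 3 * SS 2 * TT 3) * SS 1 := by
    calc SS 1 * (SS 2 * TT 3 * SS 2) * SS 1 = SS 1 * SS 2 * TT 3 * SS 2 * SS 1 := by group
      _ = TT 3 * SS 2 * SS 1 * SS 2 * TT 3 := k4
      _ = TT 3 * (SS 2 * SS 1 * SS 2) * TT 3 := by group
      _ = TT 3 * (SS 1 * SS 2 * SS 1) * TT 3 := by rw [← r16]
      _ = TT 3 * SS 1 * SS 2 * (SS 1 * TT 3) := by group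
      _ = SS 1 * TT 3 * SS 2 * (SS 1 * TT 3) := by rw [← r17]
      _ = SS 1 * TT 3 * SS 2 * (TT 3 * SS 1) := by nth_rewrite 2 [r17]; rfl
      _ = SS 1 * (TT 3 * SS 2 * TT 3) * SS 1 := by group
  exact mul_left_cancel (mul_right_cancel k7)

theorem sB4 : ∀ i : ℕ, 1 ≤ i → SS i * TT (i+1) * SS i = TT (i+1) * SS i * TT (i+1)
  | 0, h => absurd h (by omega)
  | 1, _ => r18
  | 2, _ => s2t3
  | (m+3), _ => by
      have e1 : (XX 0)⁻¹ * SS (m+2) * XX 0 = SS (m+3) := cS (m+2) (by omega)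
      have e2 : (XX 0)⁻¹ * TT (m+3) * XX 0 = TT (m+4) := cT (m+3) (by omega)
      show SS (m+3) * TT (m+4) * SS (m+3) = TT (m+4) * SS (m+3) * TT (m+4)
      rw [← e1, ← e2]
      exact braid_conj (sB4 (m+2) (by omega))

end HBV

namespace HBV

/-! ### The `GBV` side -/

open BVGen GBV

abbrev piB : FreeGroup BVGen →* GBV := PresentedGroup.mk BVGen.bvRels

lemma beq {u v : FreeGroup BVGen} (h : grel u v ∈ BVGen.bvRels) : piB u = piB v := by
  have h1 : piB (grel u v) = 1 :=
    (QuotientGroup.eq_one_iff _).mpr (Subgroup.subset_normalClosure h)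
  have h2 : piB u * (piB v)⁻¹ = 1 := by
    simpa [grel, map_mul, map_inv] using h1
  exact mul_inv_eq_one.mp h2

lemma gA (i j : ℕ) (h : i < j) : xg j * xg i = xg i * xg (j + 1) := by
  have h0 := beq (u := BVGen.X j * BVGen.X i) (v := BVGen.X i * BVGen.X (j+1))
    (Or.inl ⟨i, j, h, rfl⟩)
  simp only [map_mul] at h0; exact h0

lemma gB1 (i j : ℕ) (hi : 1 ≤ i) (hj : i + 2 ≤ j) : sg i * sg j = sg j * sg i := by
  have h0 := beq (u := BVGen.S i * BVGen.S j) (v := BVGen.S j * BVGen.S i)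
    (Or.inr (Or.inl ⟨i, j, hi, hj, rfl⟩))
  simp only [map_mul] at h0; exact h0

lemma gB2 (i : ℕ) (hi : 1 ≤ i) :
    sg i * sg (i+1) * sg i = sg (i+1) * sg i * sg (i+1) := by
  have h0 := beq (u := BVGen.S i * BVGen.S (i+1) * BVGen.S i)
    (v := BVGen.S (i+1) * BVGen.S i * BVGen.S (i+1))
    (Or.inr (Or.inr (Or.inl ⟨i, hi, rfl⟩)))
  simp only [map_mul] at h0; exact h0

lemma gB3 (i j : ℕ) (hi : 1 ≤ i) (hj : i + 2 ≤ j) : sg i * tg j = tg j * sg i := by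
  have h0 := beq (u := BVGen.S i * BVGen.T j) (v := BVGen.T j * BVGen.S i)
    (Or.inr (Or.inr (Or.inr (Or.inl ⟨i, j, hi, hj, rfl⟩))))
  simp only [map_mul] at h0; exact h0

lemma gB4 (i : ℕ) (hi : 1 ≤ i) :
    sg i * tg (i+1) * sg i = tg (i+1) * sg i * tg (i+1) := by
  have h0 := beq (u := BVGen.S i * BVGen.T (i+1) * BVGen.S i)
    (v := BVGen.T (i+1) * BVGen.S i * BVGen.T (i+1))
    (Or.inr (Or.inr (Or.inr (Or.inr (Or.inl ⟨i, hi, rfl⟩)))))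
  simp only [map_mul] at h0; exact h0

lemma gC1 (i j : ℕ) (hi : 1 ≤ i) (hj : i < j) : sg i * xg j = xg j * sg i := by
  have h0 := beq (u := BVGen.S i * BVGen.X j) (v := BVGen.X j * BVGen.S i)
    (Or.inr (Or.inr (Or.inr (Or.inr (Or.inr (Or.inl ⟨i, j, hi, hj, rfl⟩))))))
  simp only [map_mul] at h0; exact h0

lemma gC2 (i : ℕ) (hi : 1 ≤ i) : sg i * xg i = xg (i - 1) * sg (i+1) * sg i := by
  have h0 := beq (u := BVGen.S i * BVGen.X i) (v := BVGen.X (i-1) * BVGen.S (i+1) * BVGen.S i)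
    (Or.inr (Or.inr (Or.inr (Or.inr (Or.inr (Or.inr (Or.inl ⟨i, hi, rfl⟩)))))))
  simp only [map_mul] at h0; exact h0

lemma gC3 (i j : ℕ) (hj : j + 2 ≤ i) : sg i * xg j = xg j * sg (i+1) := by
  have h0 := beq (u := BVGen.S i * BVGen.X j) (v := BVGen.X j * BVGen.S (i+1))
    (Or.inr (Or.inr (Or.inr (Or.inr (Or.inr (Or.inr (Or.inr (Or.inl ⟨i, j, hj, rfl⟩))))))))
  simp only [map_mul] at h0; exact h0

lemma gC4 (i : ℕ) : sg (i+1) * xg i = xg (i+1) * sg (i+1) * sg (i+2) := by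
  have h0 := beq (u := BVGen.S (i+1) * BVGen.X i)
    (v := BVGen.X (i+1) * BVGen.S (i+1) * BVGen.S (i+2))
    (Or.inr (Or.inr (Or.inr (Or.inr (Or.inr (Or.inr (Or.inr (Or.inr (Or.inl ⟨i, rfl⟩)))))))))
  simp only [map_mul] at h0; exact h0

lemma gD1 (i j : ℕ) (hj : j + 2 ≤ i) : tg i * xg j = xg j * tg (i+1) := by
  have h0 := beq (u := BVGen.T i * BVGen.X j) (v := BVGen.X j * BVGen.T (i+1))
    (Or.inr (Or.inr (Or.inr (Or.inr (Or.inr (Or.inr (Or.inr (Or.inr (Or.inr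
      (Or.inl ⟨i, j, hj, rfl⟩))))))))))
  simp only [map_mul] at h0; exact h0

lemma gD2 (i : ℕ) (hi : 1 ≤ i) : tg i * xg (i-1) = sg i * tg (i+1) := by
  have h0 := beq (u := BVGen.T i * BVGen.X (i-1)) (v := BVGen.S i * BVGen.T (i+1))
    (Or.inr (Or.inr (Or.inr (Or.inr (Or.inr (Or.inr (Or.inr (Or.inr (Or.inr
      (Or.inr (Or.inl ⟨i, hi, rfl⟩)))))))))))
  simp only [map_mul] at h0; exact h0

lemma gD3 (i : ℕ) (hi : 1 ≤ i) : tg i = xg (i-1) * tg (i+1) * sg i := by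
  have h0 := beq (u := BVGen.T i) (v := BVGen.X (i-1) * BVGen.T (i+1) * BVGen.S i)
    (Or.inr (Or.inr (Or.inr (Or.inr (Or.inr (Or.inr (Or.inr (Or.inr (Or.inr
      (Or.inr (Or.inr ⟨i, hi, rfl⟩)))))))))))
  simp only [map_mul] at h0; exact h0

end HBV

namespace HBV

open BVGen GBV

/-! ### The homomorphism `H → BV` -/

def fphi : HGen → GBV
  | HGen.x0 => xg 0
  | HGen.x1 => xg 1
  | HGen.s1 => sg 1
  | HGen.t1 => tg 1

abbrev FB : FreeGroup HGen →* GBV := FreeGroup.lift fphi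

theorem pxg : ∀ i : ℕ, FB (xH i) = xg i
  | 0 => FreeGroup.lift_apply_of
  | 1 => FreeGroup.lift_apply_of
  | (m+2) => by
      have i1 := pxg m
      have i2 := pxg (m+1)
      have g1 : xg (m+1) * xg m = xg m * xg (m+2) := gA m (m+1) (by omega)
      show FB (xH (m+2)) = xg (m+2)
      rw [show xH (m+2) = (xH m)⁻¹ * xH (m+1) * xH m from rfl, map_mul, map_mul, map_inv,
        i1, i2]
      calc (xg m)⁻¹ * xg (m+1) * xg m = (xg m)⁻¹ * (xg (m+1) * xg m) := by group
        _ = (xg m)⁻¹ * (xg m * xg (m+2)) := by rw [g1]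
        _ = xg (m+2) := by group

theorem psg : ∀ i : ℕ, FB (sH (i+1)) = sg (i+1)
  | 0 => FreeGroup.lift_apply_of
  | (m+1) => by
      have g1 : sg (m+1) * xg (m+1) = xg m * sg (m+2) * sg (m+1) := gC2 (m+1) (by omega)
      show FB (sH (m+2)) = sg (m+2)
      rw [show sH (m+2) = (xH m)⁻¹ * sH (m+1) * xH (m+1) * (sH (m+1))⁻¹ from rfl]
      simp only [map_mul, map_inv]
      rw [pxg m, pxg (m+1), (psg m : FB (sH (m+1)) = sg (m+1))]
      calc (xg m)⁻¹ * sg (m+1) * xg (m+1) * (sg (m+1))⁻¹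
          = (xg m)⁻¹ * (sg (m+1) * xg (m+1)) * (sg (m+1))⁻¹ := by group
        _ = (xg m)⁻¹ * (xg m * sg (m+2) * sg (m+1)) * (sg (m+1))⁻¹ := by rw [g1]
        _ = sg (m+2) := by group

theorem ptg : ∀ i : ℕ, FB (tH (i+1)) = tg (i+1)
  | 0 => FreeGroup.lift_apply_of
  | (m+1) => by
      have g1 : tg (m+1) = xg m * tg (m+2) * sg (m+1) := gD3 (m+1) (by omega)
      show FB (tH (m+2)) = tg (m+2)
      rw [show tH (m+2) = (xH m)⁻¹ * tH (m+1) * (sH (m+1))⁻¹ from rfl]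
      simp only [map_mul, map_inv]
      rw [pxg m, (ptg m : FB (tH (m+1)) = tg (m+1)),
        (psg m : FB (sH (m+1)) = sg (m+1))]
      rw [g1]; group

theorem hphi : ∀ r ∈ hRels, FB r = 1 := by
  have px0 : FB (xH 0) = xg 0 := pxg 0
  have px1 : FB (xH 1) = xg 1 := pxg 1
  have px2 : FB (xH 2) = xg 2 := pxg 2
  have px3 : FB (xH 3) = xg 3 := pxg 3
  have px4 : FB (xH 4) = xg 4 := pxg 4
  have ps1 : FB (sH 1) = sg 1 := psg 0
  have ps2 : FB (sH 2) = sg 2 := psg 1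
  have ps3 : FB (sH 3) = sg 3 := psg 2
  have ps4 : FB (sH 4) = sg 4 := psg 3
  have pt1 : FB (tH 1) = tg 1 := ptg 0
  have pt2 : FB (tH 2) = tg 2 := ptg 1
  have pt3 : FB (tH 3) = tg 3 := ptg 2
  have pt4 : FB (tH 4) = tg 4 := ptg 3
  intro r hr
  simp only [hRels, Set.mem_insert_iff, Set.mem_singleton_iff] at hr
  rcases hr with rfl|rfl|rfl|rfl|rfl|rfl|rfl|rfl|rfl|rfl|rfl|rfl|rfl|rfl|rfl|rfl|rfl|rfl
  · simp only [grel, map_mul, map_inv, px0, px2, px3, mul_inv_eq_one]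
    exact gA 0 2 (by omega)
  · simp only [grel, map_mul, map_inv, px1, px3, px4, mul_inv_eq_one]
    exact gA 1 3 (by omega)
  · simp only [grel, map_mul, map_inv, ps1, px2, mul_inv_eq_one]
    exact gC1 1 2 (by omega) (by omega)
  · simp only [grel, map_mul, map_inv, ps1, px3, mul_inv_eq_one]
    exact gC1 1 3 (by omega) (by omega)
  · simp only [grel, map_mul, map_inv, ps2, px3, mul_inv_eq_one]
    exact gC1 2 3 (by omega) (by omega)
  · simp only [grel, map_mul, map_inv, ps2, px4, mul_inv_eq_one]
    exact gC1 2 4 (by omega) (by omega)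
  · simp only [grel, map_mul, map_inv, ps2, ps3, px0, mul_inv_eq_one]
    exact gC3 2 0 (by omega)
  · simp only [grel, map_mul, map_inv, ps3, ps4, px1, mul_inv_eq_one]
    exact gC3 3 1 (by omega)
  · simp only [grel, map_mul, map_inv, ps1, ps2, px0, px1, mul_inv_eq_one]
    exact gC4 0
  · simp only [grel, map_mul, map_inv, ps2, ps3, px1, px2, mul_inv_eq_one]
    exact gC4 1
  · simp only [grel, map_mul, map_inv, pt2, pt3, px0, mul_inv_eq_one]
    exact gD1 2 0 (by omega)
  · simp only [grel, map_mul, map_inv, pt3, pt4, px1, mul_inv_eq_one]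
    exact gD1 3 1 (by omega)
  · simp only [grel, map_mul, map_inv, pt1, pt2, ps1, px0, mul_inv_eq_one]
    exact gD2 1 (by omega)
  · simp only [grel, map_mul, map_inv, pt2, pt3, ps2, px1, mul_inv_eq_one]
    exact gD2 2 (by omega)
  · simp only [grel, map_mul, map_inv, ps1, ps3, mul_inv_eq_one]
    exact gB1 1 3 (by omega) (by omega)
  · simp only [grel, map_mul, map_inv, ps1, ps2, mul_inv_eq_one]
    exact gB2 1 (by omega)
  · simp only [grel, map_mul, map_inv, ps1, pt3, mul_inv_eq_one]
    exact gB3 1 3 (by omega) (by omega)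
  · simp only [grel, map_mul, map_inv, ps1, pt2, mul_inv_eq_one]
    exact gB4 1 (by omega)

def phi : HGrp →* GBV := PresentedGroup.toGroup hphi

end HBV

namespace HBV

open BVGen GBV

/-! ### The homomorphism `BV → H` -/

def fpsi : BVGen → HGrp
  | BVGen.x i => XX i
  | BVGen.s i => SS (i + 1)
  | BVGen.t i => TT (i + 1)

abbrev FH : FreeGroup BVGen →* HGrp := FreeGroup.lift fpsi

lemma FHX (i : ℕ) : FH (BVGen.X i) = XX i := FreeGroup.lift_apply_of

lemma FHS (i : ℕ) : FH (BVGen.S i) = SS (i - 1 + 1) := FreeGroup.lift_apply_of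

lemma FHT (i : ℕ) : FH (BVGen.T i) = TT (i - 1 + 1) := FreeGroup.lift_apply_of

theorem hpsi : ∀ r ∈ BVGen.bvRels, FH r = 1 := by
  intro r hr
  simp only [BVGen.bvRels, Set.mem_setOf_eq] at hr
  rcases hr with ⟨i,j,hij,rfl⟩ | ⟨i,j,hi,hj,rfl⟩ | ⟨i,hi,rfl⟩ | ⟨i,j,hi,hj,rfl⟩ |
    ⟨i,hi,rfl⟩ | ⟨i,j,hi,hj,rfl⟩ | ⟨i,hi,rfl⟩ | ⟨i,j,hj,rfl⟩ | ⟨i,rfl⟩ |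
    ⟨i,j,hj,rfl⟩ | ⟨i,hi,rfl⟩ | ⟨i,hi,rfl⟩
  · -- (A)
    simp only [grel, map_mul, map_inv, FHX, mul_inv_eq_one]
    exact hA i j hij
  · -- (B1)
    simp only [grel, map_mul, map_inv, FHS, mul_inv_eq_one]
    rw [show i - 1 + 1 = i by omega, show j - 1 + 1 = j by omega]
    exact sB1 i j hi hj
  · -- (B2)
    simp only [grel, map_mul, map_inv, FHS, Nat.add_sub_cancel, mul_inv_eq_one]
    rw [show i - 1 + 1 = i by omega]
    exact sB2 i hi
  · -- (B3)
    simp only [grel, map_mul, map_inv, FHS, FHT, mul_inv_eq_one]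
    rw [show i - 1 + 1 = i by omega, show j - 1 + 1 = j by omega]
    exact sB3 i j hi hj
  · -- (B4)
    simp only [grel, map_mul, map_inv, FHS, FHT, Nat.add_sub_cancel, mul_inv_eq_one]
    rw [show i - 1 + 1 = i by omega]
    exact sB4 i hi
  · -- (C1)
    simp only [grel, map_mul, map_inv, FHS, FHX, mul_inv_eq_one]
    rw [show i - 1 + 1 = i by omega]
    exact hC1 i j hi hj
  · -- (C2)
    simp only [grel, map_mul, map_inv, FHS, FHX, Nat.add_sub_cancel, mul_inv_eq_one]
    rw [show i - 1 + 1 = i by omega]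
    exact hC2 i hi
  · -- (C3)
    simp only [grel, map_mul, map_inv, FHS, FHX, Nat.add_sub_cancel, mul_inv_eq_one]
    rw [show i - 1 + 1 = i by omega]
    exact hC3 i j hj
  · -- (C4)
    simp only [grel, map_mul, map_inv, FHS, FHX, Nat.add_sub_cancel, mul_inv_eq_one]
    rw [show i + 2 - 1 + 1 = i + 2 by omega]
    exact hC4 i
  · -- (D1)
    simp only [grel, map_mul, map_inv, FHT, FHX, Nat.add_sub_cancel, mul_inv_eq_one]
    rw [show i - 1 + 1 = i by omega]
    exact hD1 i j hj
  · -- (D2)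
    simp only [grel, map_mul, map_inv, FHS, FHT, FHX, Nat.add_sub_cancel, mul_inv_eq_one]
    rw [show i - 1 + 1 = i by omega]
    exact hD2 i hi
  · -- (D3)
    simp only [grel, map_mul, map_inv, FHS, FHT, FHX, Nat.add_sub_cancel, mul_inv_eq_one]
    rw [show i - 1 + 1 = i by omega]
    exact hD3 i hi

def psi : GBV →* HGrp := PresentedGroup.toGroup hpsi

/-! ### The two compositions are the identity -/

lemma key1 : ∀ x : HGen, psi (phi (PresentedGroup.of x)) = PresentedGroup.of x := by
  intro x
  have h1 : phi (PresentedGroup.of x) = fphi x := PresentedGroup.toGroup.of hphi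
  rw [h1]
  cases x
  · exact (PresentedGroup.toGroup.of hpsi : psi (PresentedGroup.of (BVGen.x 0)) = _)
  · exact (PresentedGroup.toGroup.of hpsi : psi (PresentedGroup.of (BVGen.x 1)) = _)
  · exact (PresentedGroup.toGroup.of hpsi : psi (PresentedGroup.of (BVGen.s 0)) = _)
  · exact (PresentedGroup.toGroup.of hpsi : psi (PresentedGroup.of (BVGen.t 0)) = _)

lemma key2 : ∀ b : BVGen, phi (psi (PresentedGroup.of b)) = PresentedGroup.of b := by
  intro b
  have h1 : psi (PresentedGroup.of b) = fpsi b := PresentedGroup.toGroup.of hpsi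
  rw [h1]
  cases b with
  | x i =>
      exact pxg i
  | s i =>
      exact psg i
  | t i =>
      exact ptg i

lemma comp1 : psi.comp phi = MonoidHom.id HGrp :=
  PresentedGroup.ext fun x => key1 x

lemma comp2 : phi.comp psi = MonoidHom.id GBV :=
  PresentedGroup.ext fun b => key2 b

end HBV

/-- There is a group isomorphism `H ≃ BV` sending `x₀ ↦ x₀`, `x₁ ↦ x₁`,
`σ₁ ↦ σ₁`, `τ₁ ↦ τ₁`; hence `BV` has a finite presentation with 4 generators
and 18 relators. -/
theorem h_iso_bv :
    ∃ e : HGrp ≃* GBV,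
      e (PresentedGroup.of HGen.x0) = GBV.xg 0 ∧
      e (PresentedGroup.of HGen.x1) = GBV.xg 1 ∧
      e (PresentedGroup.of HGen.s1) = GBV.sg 1 ∧
      e (PresentedGroup.of HGen.t1) = GBV.tg 1 := by
  refine ⟨MonoidHom.toMulEquiv HBV.phi HBV.psi HBV.comp1 HBV.comp2, ?_, ?_, ?_, ?_⟩
  · exact (PresentedGroup.toGroup.of HBV.hphi :
      HBV.phi (PresentedGroup.of HGen.x0) = HBV.fphi HGen.x0)
  · exact (PresentedGroup.toGroup.of HBV.hphi :
      HBV.phi (PresentedGroup.of HGen.x1) = HBV.fphi HGen.x1)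
  · exact (PresentedGroup.toGroup.of HBV.hphi :
      HBV.phi (PresentedGroup.of HGen.s1) = HBV.fphi HGen.s1)
  · exact (PresentedGroup.toGroup.of HBV.hphi :
      HBV.phi (PresentedGroup.of HGen.t1) = HBV.fphi HGen.t1)
end

section
/- In the group H, the relation σ_1 τ_k = τ_k σ_1 holds for every k ≥ 3 (where σ_1 is a generator and τ_k is the inductively defined abbreviation). -/
/-!
A subgroup of the free group containing `x_i`, `x_{i+1}`, `σ_{i+1}` and `τ_{i+1}` contains every
later `x_j`, `σ_j`, `τ_j`: the recursions build each of them from earlier letters only (`σ_{j+1}` and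
`τ_{j+1}` through `x_{j-1}`, `x_j` and `σ_j`, all of index at least `i` when `j > i`). Take for this
subgroup the preimage of the centralizer of `σ₁` in `H`, with `i = 2`: four of the relators say
precisely that `σ₁` commutes with `x₂`, `x₃`, `σ₃` and `τ₃`.
-/

section

variable {S : Subgroup (FreeGroup HGen)} {i : ℕ}

theorem xH_mem_of_le (h₀ : xH i ∈ S) (h₁ : xH (i + 1) ∈ S) {j : ℕ} (hj : i ≤ j) :
    xH j ∈ S := by
  suffices ∀ n, xH (i + n) ∈ S ∧ xH (i + n + 1) ∈ S by
    obtain ⟨n, rfl⟩ := Nat.exists_eq_add_of_le hj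
    exact (this n).1
  intro n
  induction n with
  | zero => exact ⟨h₀, h₁⟩
  | succ n ih =>
    refine ⟨ih.2, ?_⟩
    change (xH (i + n))⁻¹ * xH (i + n + 1) * xH (i + n) ∈ S
    exact S.mul_mem (S.mul_mem (S.inv_mem ih.1) ih.2) ih.1

theorem sH_mem_of_le (hx : ∀ j, i ≤ j → xH j ∈ S) (hs : sH (i + 1) ∈ S) {j : ℕ}
    (hj : i + 1 ≤ j) : sH j ∈ S := by
  induction j, hj using Nat.le_induction with
  | base => exact hs
  | succ j hj ih =>
    obtain ⟨m, rfl⟩ : ∃ m, j = m + 1 := ⟨j - 1, by omega⟩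
    change (xH m)⁻¹ * sH (m + 1) * xH (m + 1) * (sH (m + 1))⁻¹ ∈ S
    exact S.mul_mem (S.mul_mem (S.mul_mem (S.inv_mem (hx m (by omega))) ih)
      (hx (m + 1) (by omega))) (S.inv_mem ih)

theorem tH_mem_of_le (hx : ∀ j, i ≤ j → xH j ∈ S) (hs : ∀ j, i + 1 ≤ j → sH j ∈ S)
    (ht : tH (i + 1) ∈ S) {j : ℕ} (hj : i + 1 ≤ j) : tH j ∈ S := by
  induction j, hj using Nat.le_induction with
  | base => exact ht
  | succ j hj ih =>
    obtain ⟨m, rfl⟩ : ∃ m, j = m + 1 := ⟨j - 1, by omega⟩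
    change (xH m)⁻¹ * tH (m + 1) * (sH (m + 1))⁻¹ ∈ S
    exact S.mul_mem (S.mul_mem (S.inv_mem (hx m (by omega))) ih) (S.inv_mem (hs (m + 1) hj))

end

def sigmaOneCentralizer : Subgroup (FreeGroup HGen) :=
  (Subgroup.centralizer {PresentedGroup.mk hRels (sH 1)}).comap (PresentedGroup.mk hRels)

theorem mem_sigmaOneCentralizer_of_mem_hRels {u : FreeGroup HGen}
    (h : grel (sH 1 * u) (u * sH 1) ∈ hRels) : u ∈ sigmaOneCentralizer := by
  have := PresentedGroup.mk_eq_mk_of_mul_inv_mem h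
  rw [map_mul, map_mul] at this
  exact Subgroup.mem_centralizer_singleton_iff.mpr this.symm

/-- In `H`, the relation `σ₁ τ_k = τ_k σ₁` holds for every `k ≥ 3`. -/
theorem h_sigma1_tau_comm (k : ℕ) (hk : 3 ≤ k) :
    PresentedGroup.mk hRels (sH 1 * tH k) = PresentedGroup.mk hRels (tH k * sH 1) := by
  have hx : ∀ j, 2 ≤ j → xH j ∈ sigmaOneCentralizer := fun _ =>
    xH_mem_of_le (mem_sigmaOneCentralizer_of_mem_hRels (by simp [hRels]))
      (mem_sigmaOneCentralizer_of_mem_hRels (by simp [hRels]))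
  have hs : ∀ j, 3 ≤ j → sH j ∈ sigmaOneCentralizer := fun _ =>
    sH_mem_of_le hx (mem_sigmaOneCentralizer_of_mem_hRels (by simp [hRels]))
  have ht : tH k ∈ sigmaOneCentralizer :=
    tH_mem_of_le hx hs (mem_sigmaOneCentralizer_of_mem_hRels (by simp [hRels])) hk
  rw [map_mul, map_mul]
  exact (Subgroup.mem_centralizer_singleton_iff.mp ht).symm
end

section
/- Let H_V be the presented group obtained from H by adding the two relators σ_1^2 = 1 and τ_1^2 = 1 (a presentation of Thompson's group V with 4 generators and 20 relators). Then in H_V, the relations σ_i^2 = 1 and τ_i^2 = 1 hold for all i ≥ 1 (where σ_i and τ_i are the inductively defined abbreviations). -/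
/-- The presentation of Thompson's group `V` obtained from `H` by adding the
relators `σ₁² = 1` and `τ₁² = 1` (4 generators, 20 relators). -/
abbrev HV : Type := PresentedGroup (hRels ∪ {sH 1 ^ 2, tH 1 ^ 2})

namespace HVaux

abbrev vRels : Set (FreeGroup HGen) := hRels ∪ {sH 1 ^ 2, tH 1 ^ 2}

/-- The quotient map. -/
abbrev π : FreeGroup HGen →* HV := PresentedGroup.mk vRels

abbrev X (n : ℕ) : HV := π (xH n)
abbrev S (n : ℕ) : HV := π (sH n)
abbrev T (n : ℕ) : HV := π (tH n)

lemma rel_one {r : FreeGroup HGen} (h : r ∈ vRels) : π r = 1 :=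
  (QuotientGroup.eq_one_iff r).mpr (Subgroup.subset_normalClosure h)

lemma relEq {u v : FreeGroup HGen} (h : grel u v ∈ vRels) : π u = π v := by
  have h1 := rel_one h
  rw [grel, map_mul, map_inv] at h1
  exact mul_inv_eq_one.mp h1

lemma xdef (n : ℕ) : X (n + 2) = (X n)⁻¹ * X (n + 1) * X n := by
  simp only [X, xH, map_mul, map_inv]

lemma sdef (n : ℕ) : S (n + 2) = (X n)⁻¹ * S (n + 1) * X (n + 1) * (S (n + 1))⁻¹ := by
  simp only [S, X, sH, map_mul, map_inv]

lemma tdef (n : ℕ) : T (n + 2) = (X n)⁻¹ * T (n + 1) * (S (n + 1))⁻¹ := by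
  simp only [T, X, S, tH, map_mul, map_inv]

lemma r1 : X 2 * X 0 = X 0 * X 3 := by
  simpa [map_mul] using relEq (Set.mem_union_left _ (by simp [hRels]))
    (u := xH 2 * xH 0) (v := xH 0 * xH 3)

lemma r7 : S 2 * X 0 = X 0 * S 3 := by
  simpa [map_mul] using relEq (Set.mem_union_left _ (by simp [hRels]))
    (u := sH 2 * xH 0) (v := xH 0 * sH 3)

lemma r9 : S 1 * X 0 = X 1 * S 1 * S 2 := by
  simpa [map_mul] using relEq (Set.mem_union_left _ (by simp [hRels]))
    (u := sH 1 * xH 0) (v := xH 1 * sH 1 * sH 2)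

lemma r10 : S 2 * X 1 = X 2 * S 2 * S 3 := by
  simpa [map_mul] using relEq (Set.mem_union_left _ (by simp [hRels]))
    (u := sH 2 * xH 1) (v := xH 2 * sH 2 * sH 3)

lemma r11 : T 2 * X 0 = X 0 * T 3 := by
  simpa [map_mul] using relEq (Set.mem_union_left _ (by simp [hRels]))
    (u := tH 2 * xH 0) (v := xH 0 * tH 3)

lemma r13 : T 1 * X 0 = S 1 * T 2 := by
  simpa [map_mul] using relEq (Set.mem_union_left _ (by simp [hRels]))
    (u := tH 1 * xH 0) (v := sH 1 * tH 2)

lemma r14 : T 2 * X 1 = S 2 * T 3 := by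
  simpa [map_mul] using relEq (Set.mem_union_left _ (by simp [hRels]))
    (u := tH 2 * xH 1) (v := sH 2 * tH 3)

lemma s1sq : S 1 ^ 2 = 1 := by
  have := rel_one (r := sH 1 ^ 2) (Set.mem_union_right _ (by simp))
  rwa [map_pow] at this

lemma t1sq : T 1 ^ 2 = 1 := by
  have := rel_one (r := tH 1 ^ 2) (Set.mem_union_right _ (by simp))
  rwa [map_pow] at this

/-- Conjugation by `X 0` (on the right: `g ↦ (X 0)⁻¹ * g * X 0`). -/
abbrev c : HV →* HV := (MulAut.conj ((X 0)⁻¹ : HV)).toMonoidHom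

lemma c_apply (g : HV) : c g = (X 0)⁻¹ * g * X 0 := by
  simp [MulAut.conj_apply]

lemma shiftX : ∀ n, c (X (n + 1)) = X (n + 2)
  | 0 => by rw [c_apply, xdef 0]
  | 1 => by rw [c_apply]; rw [show X 3 = (X 0)⁻¹ * (X 2 * X 0) from by rw [r1]; group]; group
  | (n + 2) => by
      calc c (X (n + 3)) = (c (X (n + 1)))⁻¹ * c (X (n + 2)) * c (X (n + 1)) := by
            rw [xdef (n + 1), map_mul, map_mul, map_inv]
        _ = (X (n + 2))⁻¹ * X (n + 3) * X (n + 2) := by rw [shiftX n, shiftX (n + 1)]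
        _ = X (n + 4) := (xdef (n + 2)).symm

lemma shiftS : ∀ n, c (S (n + 2)) = S (n + 3)
  | 0 => by rw [c_apply]; rw [show S 3 = (X 0)⁻¹ * (S 2 * X 0) from by rw [r7]; group]; group
  | (n + 1) => by
      calc c (S (n + 3))
          = (c (X (n + 1)))⁻¹ * c (S (n + 2)) * c (X (n + 2)) * (c (S (n + 2)))⁻¹ := by
            rw [sdef (n + 1), map_mul, map_mul, map_mul, map_inv, map_inv]
        _ = (X (n + 2))⁻¹ * S (n + 3) * X (n + 3) * (S (n + 3))⁻¹ := by
            rw [shiftX n, shiftX (n + 1), shiftS n]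
        _ = S (n + 4) := (sdef (n + 2)).symm

lemma shiftT : ∀ n, c (T (n + 2)) = T (n + 3)
  | 0 => by rw [c_apply]; rw [show T 3 = (X 0)⁻¹ * (T 2 * X 0) from by rw [r11]; group]; group
  | (n + 1) => by
      calc c (T (n + 3))
          = (c (X (n + 1)))⁻¹ * c (T (n + 2)) * (c (S (n + 2)))⁻¹ := by
            rw [tdef (n + 1), map_mul, map_mul, map_inv, map_inv]
        _ = (X (n + 2))⁻¹ * T (n + 3) * (S (n + 3))⁻¹ := by
            rw [shiftX n, shiftT n, shiftS n]
        _ = T (n + 4) := (tdef (n + 2)).symm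

lemma relS : ∀ n, S (n + 1) * X n = X (n + 1) * S (n + 1) * S (n + 2)
  | 0 => r9
  | 1 => r10
  | (n + 2) => by
      have h := congrArg c (relS (n + 1))
      rw [map_mul, map_mul, map_mul, shiftX n, shiftX (n + 1), shiftS n, shiftS (n + 1)] at h
      exact h

lemma relT : ∀ n, T (n + 1) * X n = S (n + 1) * T (n + 2)
  | 0 => r13
  | 1 => r14
  | (n + 2) => by
      have h := congrArg c (relT (n + 1))
      rw [map_mul, map_mul, shiftX n, shiftT n, shiftS n, shiftT (n + 1)] at h
      exact h

lemma sqS : ∀ n, S (n + 1) ^ 2 = 1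
  | 0 => s1sq
  | (n + 1) => by
      have h1 : (S (n + 1))⁻¹ * (X (n + 1))⁻¹ * (S (n + 1) * X n) = S (n + 2) := by
        rw [relS n]; group
      have hss : S (n + 1) * S (n + 1) = 1 := by rw [← sq]; exact sqS n
      rw [sq]
      calc S (n + 2) * S (n + 2)
          = ((S (n + 1))⁻¹ * (X (n + 1))⁻¹ * (S (n + 1) * X n)) *
            ((X n)⁻¹ * S (n + 1) * X (n + 1) * (S (n + 1))⁻¹) := by
            rw [h1, ← sdef n]
        _ = (S (n + 1))⁻¹ * (X (n + 1))⁻¹ * (S (n + 1) * S (n + 1)) * X (n + 1) *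
              (S (n + 1))⁻¹ := by group
        _ = (S (n + 1))⁻¹ * (X (n + 1))⁻¹ * X (n + 1) * (S (n + 1))⁻¹ := by
            rw [hss, mul_one]
        _ = (S (n + 1) * S (n + 1))⁻¹ := by group
        _ = 1 := by rw [hss, inv_one]

lemma sqT : ∀ n, T (n + 1) ^ 2 = 1
  | 0 => t1sq
  | (n + 1) => by
      have h1 : (S (n + 1))⁻¹ * (T (n + 1) * X n) = T (n + 2) := by
        rw [relT n]; group
      have hss : S (n + 1) * S (n + 1) = 1 := by rw [← sq]; exact sqS n
      have htt : T (n + 1) * T (n + 1) = 1 := by rw [← sq]; exact sqT n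
      rw [sq]
      calc T (n + 2) * T (n + 2)
          = ((S (n + 1))⁻¹ * (T (n + 1) * X n)) * ((X n)⁻¹ * T (n + 1) * (S (n + 1))⁻¹) := by
            rw [h1, ← tdef n]
        _ = (S (n + 1))⁻¹ * (T (n + 1) * T (n + 1)) * (S (n + 1))⁻¹ := by group
        _ = (S (n + 1))⁻¹ * (S (n + 1))⁻¹ := by rw [htt, mul_one]
        _ = (S (n + 1) * S (n + 1))⁻¹ := by group
        _ = 1 := by rw [hss, inv_one]

end HVaux

/-- In `H_V`, the relations `σ_i² = 1` and `τ_i² = 1` hold for all `i ≥ 1`. -/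
theorem hv_involutions (i : ℕ) (hi : 1 ≤ i) :
    PresentedGroup.mk (hRels ∪ {sH 1 ^ 2, tH 1 ^ 2}) (sH i ^ 2) = 1 ∧
    PresentedGroup.mk (hRels ∪ {sH 1 ^ 2, tH 1 ^ 2}) (tH i ^ 2) = 1 := by
  obtain ⟨n, rfl⟩ : ∃ n, i = n + 1 := ⟨i - 1, by omega⟩
  constructor
  · have := HVaux.sqS n
    rwa [← map_pow] at this
  · have := HVaux.sqT n
    rwa [← map_pow] at this
end

section
/- Let G_V be the quotient of G_BV by the normal closure of the set {σ_i^2 : i ≥ 1} ∪ {τ_i^2 : i ≥ 1} (a presentation of Thompson's group V). Then the kernel of the quotient homomorphism G_BV → G_V (the pure braided Thompson group PBV) is not finitely generated as a group. -/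
/-- The normal closure of `{σ_i² : i ≥ 1} ∪ {τ_i² : i ≥ 1}` in `BV`; the quotient
by it is Thompson's group `V`. -/
def vRelsCl : Subgroup GBV :=
  Subgroup.normalClosure {g | ∃ i, 1 ≤ i ∧ (g = GBV.sg i ^ 2 ∨ g = GBV.tg i ^ 2)}

instance : vRelsCl.Normal := Subgroup.normalClosure_normal



namespace PBVAux

/-- Points of the Cantor set. -/
abbrev Seq : Type := ℕ → Bool

/-- Prepend a bit. -/
def cn (b : Bool) (s : Seq) : Seq := fun n => Nat.casesOn n b s

/-- Tail. -/
def tl (s : Seq) : Seq := fun n => s (n + 1)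

@[simp] lemma cn_zero (b : Bool) (s : Seq) : cn b s 0 = b := rfl
@[simp] lemma cn_succ (b : Bool) (s : Seq) (n : ℕ) : cn b s (n + 1) = s n := rfl
@[simp] lemma tl_apply (s : Seq) (n : ℕ) : tl s n = s (n + 1) := rfl
@[simp] lemma tl_cn (b : Bool) (s : Seq) : tl (cn b s) = s := rfl

lemma cn_eta (s : Seq) : cn (s 0) (tl s) = s := funext fun n => by cases n <;> rfl

/-- conditional eta, convenient for simp. -/
lemma cn_eta_h {s : Seq} {b : Bool} (h : s 0 = b) : cn b (tl s) = s := h ▸ cn_eta s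

def x0f (s : Seq) : Seq :=
  cond (s 0) (cond (s 1) (cn true (tl (tl s))) (cn false (cn true (tl (tl s))))) (cn false s)

def x0g (s : Seq) : Seq :=
  cond (s 0) (cn true (cn true (tl s)))
    (cond (s 1) (cn true (cn false (tl (tl s)))) (tl s))

def s1f (s : Seq) : Seq :=
  cond (s 0) (cond (s 1) s (cn false (tl (tl s)))) (cn true s)

def t1f (s : Seq) : Seq := cn (!(s 0)) (tl s)

def lone (f : Seq → Seq) (s : Seq) : Seq := cond (s 0) (cn true (f (tl s))) s

@[simp] lemma lone_zero (f : Seq → Seq) (s : Seq) : lone f s 0 = s 0 := by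
  cases h : s 0 <;> simp [lone, h]

/-- The permutation `x_0`. -/
def xe : Equiv.Perm Seq where
  toFun := x0f
  invFun := x0g
  left_inv := by
    intro s
    cases h0 : s 0 <;> cases h1 : s 1 <;>
      simp [x0f, x0g, h0, h1, cn_eta_h]
  right_inv := by
    intro s
    cases h0 : s 0 <;> cases h1 : s 1 <;>
      simp [x0f, x0g, h0, h1, cn_eta_h]

lemma s1f_invol (s : Seq) : s1f (s1f s) = s := by
  cases h0 : s 0 <;> cases h1 : s 1 <;>
    simp [s1f, h0, h1, cn_eta_h]

lemma t1f_invol (s : Seq) : t1f (t1f s) = s := by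
  simp [t1f, cn_eta_h]

/-- The permutation `σ_1`. -/
def se : Equiv.Perm Seq where
  toFun := s1f
  invFun := s1f
  left_inv := s1f_invol
  right_inv := s1f_invol

/-- The permutation `τ_1`. -/
def te : Equiv.Perm Seq where
  toFun := t1f
  invFun := t1f
  left_inv := t1f_invol
  right_inv := t1f_invol

/-- Localization of a permutation below the vertex `1`. -/
def loneE (e : Equiv.Perm Seq) : Equiv.Perm Seq where
  toFun := lone e
  invFun := lone e.symm
  left_inv := by
    intro s
    cases h0 : s 0 <;> simp [lone, h0, cn_eta_h]
  right_inv := by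
    intro s
    cases h0 : s 0 <;> simp [lone, h0, cn_eta_h]

@[simp] lemma xe_apply (s : Seq) : xe s = x0f s := rfl
@[simp] lemma xe_symm_apply (s : Seq) : xe.symm s = x0g s := rfl
@[simp] lemma se_apply (s : Seq) : se s = s1f s := rfl
@[simp] lemma se_symm_apply (s : Seq) : se.symm s = s1f s := rfl
@[simp] lemma te_apply (s : Seq) : te s = t1f s := rfl
@[simp] lemma te_symm_apply (s : Seq) : te.symm s = t1f s := rfl
@[simp] lemma loneE_apply (e : Equiv.Perm Seq) (s : Seq) : loneE e s = lone e s := rfl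
@[simp] lemma loneE_symm_apply (e : Equiv.Perm Seq) (s : Seq) :
    (loneE e).symm s = lone e.symm s := rfl

lemma loneE_mul (e f : Equiv.Perm Seq) : loneE (e * f) = loneE e * loneE f := by
  apply Equiv.ext
  intro s
  cases h0 : s 0 <;> simp [lone, h0, Equiv.Perm.mul_apply]

lemma loneE_one : loneE 1 = 1 := by
  apply Equiv.ext
  intro s
  cases h0 : s 0 <;> simp [lone, h0, cn_eta_h]

lemma se_sq : se * se = 1 := by
  apply Equiv.ext
  intro s
  simp [Equiv.Perm.mul_apply, s1f_invol]

lemma te_sq : te * te = 1 := by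
  apply Equiv.ext
  intro s
  simp [Equiv.Perm.mul_apply, t1f_invol]

end PBVAux

namespace PBVAux

/-- The abelian group of `ℤ`-valued functions on pairs of Cantor points
(written multiplicatively). -/
abbrev A : Type := Seq × Seq → Multiplicative ℤ

/-- The action of permutations of the Cantor set on `A`. -/
def actA : Equiv.Perm Seq →* MulAut A where
  toFun π :=
    { toFun := fun a p => a (π.symm p.1, π.symm p.2)
      invFun := fun a p => a (π p.1, π p.2)
      left_inv := by intro a; funext p; simp
      right_inv := by intro a; funext p; simp
      map_mul' := fun a b => rfl }
  map_one' := by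
    apply MulEquiv.ext
    intro a; funext p; simp; rfl
  map_mul' := by
    intro g h
    apply MulEquiv.ext
    intro a; funext p
    simp [MulAut.mul_apply, ← Equiv.Perm.inv_def, mul_inv_rev, Equiv.Perm.mul_apply]

@[simp] lemma actA_apply (π : Equiv.Perm Seq) (a : A) (p : Seq × Seq) :
    actA π a p = a (π.symm p.1, π.symm p.2) := rfl

/-- The wreath-type target group. -/
abbrev W : Type := A ⋊[actA] Equiv.Perm Seq

/-- `ofAdd 1`. -/
def e1 : Multiplicative ℤ := Multiplicative.ofAdd 1

/-- Indicator of `ξ ∈ [0], η ∈ [10]`. -/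
def cInd (ξ η : Seq) : Multiplicative ℤ :=
  cond (ξ 0) 1 (cond (η 0) (cond (η 1) 1 e1) 1)

/-- Cocycle value of `σ_1`. -/
def cs : A := fun p => cInd p.1 p.2 * cInd p.2 p.1

/-- Cocycle value of `τ_1`. -/
def ct : A := fun p => cond (p.1 0) (cond (p.2 0) 1 e1) (cond (p.2 0) e1 1)

/-- Localization of a cocycle below the vertex `1`. -/
def loneA (a : A) : A := fun p => cond (p.1 0 && p.2 0) (a (tl p.1, tl p.2)) 1

lemma loneA_mul (a b : A) : loneA (a * b) = loneA a * loneA b := by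
  funext p
  cases h : (p.1 0 && p.2 0) <;> simp [loneA, h]

lemma loneA_one : loneA 1 = 1 := by
  funext p
  cases h : (p.1 0 && p.2 0) <;> simp [loneA, h]

lemma loneA_act (π : Equiv.Perm Seq) (a : A) :
    actA (loneE π) (loneA a) = loneA (actA π a) := by
  funext p
  obtain ⟨ξ, η⟩ := p
  cases h0 : ξ 0 <;> cases k0 : η 0 <;>
    simp [loneA, lone, h0, k0]

/-- Localization on the full wreath group. -/
def lam (w : W) : W := ⟨loneA w.left, loneE w.right⟩

@[simp] lemma lam_left (w : W) : (lam w).left = loneA w.left := rfl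
@[simp] lemma lam_right (w : W) : (lam w).right = loneE w.right := rfl

lemma lam_mul (u v : W) : lam (u * v) = lam u * lam v := by
  refine SemidirectProduct.ext ?_ ?_
  · simp [loneA_mul, loneA_act]
  · simp [loneE_mul]

lemma lam_one : lam (1 : W) = 1 := by
  refine SemidirectProduct.ext ?_ ?_
  · simp [loneA_one]
  · simp [loneE_one]

lemma iter_lam_mul (k : ℕ) (u v : W) : lam^[k] (u * v) = lam^[k] u * lam^[k] v := by
  induction k generalizing u v with
  | zero => rfl
  | succ k ih =>
      rw [Function.iterate_succ_apply, Function.iterate_succ_apply,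
        Function.iterate_succ_apply, lam_mul, ih]

lemma iter_lam_left (k : ℕ) (w : W) : (lam^[k] w).left = loneA^[k] w.left := by
  induction k generalizing w with
  | zero => rfl
  | succ k ih => rw [Function.iterate_succ_apply', Function.iterate_succ_apply', lam_left, ih]

lemma iter_lam_right (k : ℕ) (w : W) : (lam^[k] w).right = loneE^[k] w.right := by
  induction k generalizing w with
  | zero => rfl
  | succ k ih => rw [Function.iterate_succ_apply', Function.iterate_succ_apply', lam_right, ih]

lemma iter_loneE_mul (k : ℕ) (e f : Equiv.Perm Seq) :
    loneE^[k] (e * f) = loneE^[k] e * loneE^[k] f := by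
  induction k generalizing e f with
  | zero => rfl
  | succ k ih =>
      rw [Function.iterate_succ_apply, Function.iterate_succ_apply,
        Function.iterate_succ_apply, loneE_mul, ih]

lemma iter_loneE_one (k : ℕ) : loneE^[k] (1 : Equiv.Perm Seq) = 1 := by
  induction k with
  | zero => rfl
  | succ k ih => rw [Function.iterate_succ_apply, loneE_one, ih]

/-- The images of the generators. -/
def xw : W := ⟨1, xe⟩
def sw : W := ⟨cs, se⟩
def tw : W := ⟨ct, te⟩

@[simp] lemma xw_left : xw.left = 1 := rfl
@[simp] lemma xw_right : xw.right = xe := rfl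
@[simp] lemma sw_left : sw.left = cs := rfl
@[simp] lemma sw_right : sw.right = se := rfl
@[simp] lemma tw_left : tw.left = ct := rfl
@[simp] lemma tw_right : tw.right = te := rfl

end PBVAux

namespace PBVAux

section BaseLemmas

/-- Simp set bundle used in pointwise verifications. -/
lemma perm_inv_apply (g h : Equiv.Perm Seq) (s : Seq) :
    (g * h).symm s = h.symm (g.symm s) := by
  simp [← Equiv.Perm.inv_def, mul_inv_rev, Equiv.Perm.mul_apply]

lemma G1 (w : W) : xw * lam (lam w) = lam w * xw := by
  obtain ⟨a, π⟩ := w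
  refine SemidirectProduct.ext ?_ ?_
  · funext p
    obtain ⟨ξ, η⟩ := p
    cases hξ0 : ξ 0 <;> cases hξ1 : ξ 1 <;> cases hη0 : η 0 <;> cases hη1 : η 1 <;>
      simp [loneA, lone, x0f, x0g, cs, ct, cInd, perm_inv_apply,
        hξ0, hξ1, hη0, hη1, cn_eta_h]
  · apply Equiv.ext
    intro s
    cases h0 : s 0 <;> cases h1 : s 1 <;>
      simp [Equiv.Perm.mul_apply, lone, x0f, x0g, h0, h1, cn_eta_h]

lemma G2 (w : W) : sw * lam (lam w) = lam (lam w) * sw := by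
  obtain ⟨a, π⟩ := w
  refine SemidirectProduct.ext ?_ ?_
  · funext p
    obtain ⟨ξ, η⟩ := p
    cases hξ0 : ξ 0 <;> cases hξ1 : ξ 1 <;> cases hη0 : η 0 <;> cases hη1 : η 1 <;>
      simp [loneA, lone, s1f, cs, ct, cInd, perm_inv_apply,
        hξ0, hξ1, hη0, hη1, cn_eta_h]
  · apply Equiv.ext
    intro s
    cases h0 : s 0 <;> cases h1 : s 1 <;>
      simp [Equiv.Perm.mul_apply, lone, s1f, h0, h1, cn_eta_h]

lemma B2b : sw * lam sw * sw = lam sw * sw * lam sw := by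
  refine SemidirectProduct.ext ?_ ?_
  · funext p
    obtain ⟨ξ, η⟩ := p
    cases hξ0 : ξ 0 <;> cases hξ1 : ξ 1 <;> cases hξ2 : ξ 2 <;>
      cases hη0 : η 0 <;> cases hη1 : η 1 <;> cases hη2 : η 2 <;>
      simp [loneA, lone, s1f, cs, ct, cInd, perm_inv_apply,
        hξ0, hξ1, hξ2, hη0, hη1, hη2, cn_eta_h, mul_comm]
  · apply Equiv.ext
    intro s
    cases h0 : s 0 <;> cases h1 : s 1 <;> cases h2 : s 2 <;>
      simp [Equiv.Perm.mul_apply, lone, s1f, h0, h1, h2, cn_eta_h]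

lemma B4b : sw * lam tw * sw = lam tw * sw * lam tw := by
  refine SemidirectProduct.ext ?_ ?_
  · funext p
    obtain ⟨ξ, η⟩ := p
    cases hξ0 : ξ 0 <;> cases hξ1 : ξ 1 <;> cases hξ2 : ξ 2 <;>
      cases hη0 : η 0 <;> cases hη1 : η 1 <;> cases hη2 : η 2 <;>
      simp [loneA, lone, s1f, t1f, cs, ct, cInd, perm_inv_apply,
        hξ0, hξ1, hξ2, hη0, hη1, hη2, cn_eta_h, mul_comm]
  · apply Equiv.ext
    intro s
    cases h0 : s 0 <;> cases h1 : s 1 <;> cases h2 : s 2 <;>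
      simp [Equiv.Perm.mul_apply, lone, s1f, t1f, h0, h1, h2, cn_eta_h]

lemma C2b : sw * lam xw = xw * lam sw * sw := by
  refine SemidirectProduct.ext ?_ ?_
  · funext p
    obtain ⟨ξ, η⟩ := p
    cases hξ0 : ξ 0 <;> cases hξ1 : ξ 1 <;> cases hξ2 : ξ 2 <;>
      cases hη0 : η 0 <;> cases hη1 : η 1 <;> cases hη2 : η 2 <;>
      simp [loneA, lone, s1f, x0f, x0g, cs, ct, cInd, perm_inv_apply,
        hξ0, hξ1, hξ2, hη0, hη1, hη2, cn_eta_h, mul_comm]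
  · apply Equiv.ext
    intro s
    cases h0 : s 0 <;> cases h1 : s 1 <;> cases h2 : s 2 <;>
      simp [Equiv.Perm.mul_apply, lone, s1f, x0f, x0g, h0, h1, h2, cn_eta_h]

lemma C4b : sw * xw = lam xw * sw * lam sw := by
  refine SemidirectProduct.ext ?_ ?_
  · funext p
    obtain ⟨ξ, η⟩ := p
    cases hξ0 : ξ 0 <;> cases hξ1 : ξ 1 <;> cases hξ2 : ξ 2 <;>
      cases hη0 : η 0 <;> cases hη1 : η 1 <;> cases hη2 : η 2 <;>
      simp [loneA, lone, s1f, x0f, x0g, cs, ct, cInd, perm_inv_apply,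
        hξ0, hξ1, hξ2, hη0, hη1, hη2, cn_eta_h, mul_comm]
  · apply Equiv.ext
    intro s
    cases h0 : s 0 <;> cases h1 : s 1 <;> cases h2 : s 2 <;>
      simp [Equiv.Perm.mul_apply, lone, s1f, x0f, x0g, h0, h1, h2, cn_eta_h]

lemma D2b : tw * xw = sw * lam tw := by
  refine SemidirectProduct.ext ?_ ?_
  · funext p
    obtain ⟨ξ, η⟩ := p
    cases hξ0 : ξ 0 <;> cases hξ1 : ξ 1 <;> cases hξ2 : ξ 2 <;>
      cases hη0 : η 0 <;> cases hη1 : η 1 <;> cases hη2 : η 2 <;>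
      simp [loneA, lone, s1f, t1f, x0f, x0g, cs, ct, cInd, perm_inv_apply,
        hξ0, hξ1, hξ2, hη0, hη1, hη2, cn_eta_h, mul_comm]
  · apply Equiv.ext
    intro s
    cases h0 : s 0 <;> cases h1 : s 1 <;> cases h2 : s 2 <;>
      simp [Equiv.Perm.mul_apply, lone, s1f, t1f, x0f, x0g, h0, h1, h2, cn_eta_h]

lemma D3b : tw = xw * lam tw * sw := by
  refine SemidirectProduct.ext ?_ ?_
  · funext p
    obtain ⟨ξ, η⟩ := p
    cases hξ0 : ξ 0 <;> cases hξ1 : ξ 1 <;> cases hξ2 : ξ 2 <;>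
      cases hη0 : η 0 <;> cases hη1 : η 1 <;> cases hη2 : η 2 <;>
      simp [loneA, lone, s1f, t1f, x0f, x0g, cs, ct, cInd, perm_inv_apply,
        hξ0, hξ1, hξ2, hη0, hη1, hη2, cn_eta_h, mul_comm]
  · apply Equiv.ext
    intro s
    cases h0 : s 0 <;> cases h1 : s 1 <;> cases h2 : s 2 <;>
      simp [Equiv.Perm.mul_apply, lone, s1f, t1f, x0f, x0g, h0, h1, h2, cn_eta_h]


end BaseLemmas

end PBVAux

namespace PBVAux

/-- The assignment of generators. -/
def fgen : BVGen → W
  | .x k => lam^[k] xw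
  | .s k => lam^[k] sw
  | .t k => lam^[k] tw

@[simp] lemma fgen_x (k : ℕ) : fgen (BVGen.x k) = lam^[k] xw := rfl
@[simp] lemma fgen_s (k : ℕ) : fgen (BVGen.s k) = lam^[k] sw := rfl
@[simp] lemma fgen_t (k : ℕ) : fgen (BVGen.t k) = lam^[k] tw := rfl

section Families

lemma lam_pow_succ (n : ℕ) (w : W) : lam^[n+1] w = lam (lam^[n] w) :=
  Function.iterate_succ_apply' lam n w

lemma famA (k e : ℕ) :
    lam^[k + (e+1)] xw * lam^[k] xw = lam^[k] xw * lam^[k + (e+2)] xw := by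
  rw [Function.iterate_add_apply lam k (e+1) xw, Function.iterate_add_apply lam k (e+2) xw,
    ← iter_lam_mul, ← iter_lam_mul]
  refine congrArg _ ?_
  simp only [show e+2 = e+1+1 from rfl]
  rw [lam_pow_succ (e+1) xw, lam_pow_succ e xw]
  exact (G1 (lam^[e] xw)).symm

lemma famB1 (k e : ℕ) :
    lam^[k] sw * lam^[k + (e+2)] sw = lam^[k + (e+2)] sw * lam^[k] sw := by
  rw [Function.iterate_add_apply lam k (e+2) sw, ← iter_lam_mul, ← iter_lam_mul]
  refine congrArg _ ?_
  simp only [show e+2 = e+1+1 from rfl]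
  rw [lam_pow_succ (e+1) sw, lam_pow_succ e sw]
  exact G2 (lam^[e] sw)

lemma famB2 (k : ℕ) :
    lam^[k] sw * lam^[k+1] sw * lam^[k] sw = lam^[k+1] sw * lam^[k] sw * lam^[k+1] sw := by
  rw [show lam^[k+1] sw = lam^[k] (lam sw) from Function.iterate_succ_apply lam k sw,
    ← iter_lam_mul, ← iter_lam_mul, ← iter_lam_mul, ← iter_lam_mul]
  exact congrArg _ B2b

lemma famB3 (k e : ℕ) :
    lam^[k] sw * lam^[k + (e+2)] tw = lam^[k + (e+2)] tw * lam^[k] sw := by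
  rw [Function.iterate_add_apply lam k (e+2) tw, ← iter_lam_mul, ← iter_lam_mul]
  refine congrArg _ ?_
  simp only [show e+2 = e+1+1 from rfl]
  rw [lam_pow_succ (e+1) tw, lam_pow_succ e tw]
  exact G2 (lam^[e] tw)

lemma famB4 (k : ℕ) :
    lam^[k] sw * lam^[k+1] tw * lam^[k] sw = lam^[k+1] tw * lam^[k] sw * lam^[k+1] tw := by
  rw [show lam^[k+1] tw = lam^[k] (lam tw) from Function.iterate_succ_apply lam k tw,
    ← iter_lam_mul, ← iter_lam_mul, ← iter_lam_mul, ← iter_lam_mul]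
  exact congrArg _ B4b

lemma famC1 (k e : ℕ) :
    lam^[k] sw * lam^[k + (e+2)] xw = lam^[k + (e+2)] xw * lam^[k] sw := by
  rw [Function.iterate_add_apply lam k (e+2) xw, ← iter_lam_mul, ← iter_lam_mul]
  refine congrArg _ ?_
  simp only [show e+2 = e+1+1 from rfl]
  rw [lam_pow_succ (e+1) xw, lam_pow_succ e xw]
  exact G2 (lam^[e] xw)

lemma famC2 (k : ℕ) :
    lam^[k] sw * lam^[k+1] xw = lam^[k] xw * lam^[k+1] sw * lam^[k] sw := by
  rw [show lam^[k+1] xw = lam^[k] (lam xw) from Function.iterate_succ_apply lam k xw,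
    show lam^[k+1] sw = lam^[k] (lam sw) from Function.iterate_succ_apply lam k sw,
    ← iter_lam_mul, ← iter_lam_mul, ← iter_lam_mul]
  exact congrArg _ C2b

lemma famC3 (k e : ℕ) :
    lam^[k + (e+1)] sw * lam^[k] xw = lam^[k] xw * lam^[k + (e+2)] sw := by
  rw [Function.iterate_add_apply lam k (e+1) sw, Function.iterate_add_apply lam k (e+2) sw,
    ← iter_lam_mul, ← iter_lam_mul]
  refine congrArg _ ?_
  simp only [show e+2 = e+1+1 from rfl]
  rw [lam_pow_succ (e+1) sw, lam_pow_succ e sw]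
  exact (G1 (lam^[e] sw)).symm

lemma famC4 (k : ℕ) :
    lam^[k] sw * lam^[k] xw = lam^[k+1] xw * lam^[k] sw * lam^[k+1] sw := by
  rw [show lam^[k+1] xw = lam^[k] (lam xw) from Function.iterate_succ_apply lam k xw,
    show lam^[k+1] sw = lam^[k] (lam sw) from Function.iterate_succ_apply lam k sw,
    ← iter_lam_mul, ← iter_lam_mul, ← iter_lam_mul]
  exact congrArg _ C4b

lemma famD1 (k e : ℕ) :
    lam^[k + (e+1)] tw * lam^[k] xw = lam^[k] xw * lam^[k + (e+2)] tw := by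
  rw [Function.iterate_add_apply lam k (e+1) tw, Function.iterate_add_apply lam k (e+2) tw,
    ← iter_lam_mul, ← iter_lam_mul]
  refine congrArg _ ?_
  simp only [show e+2 = e+1+1 from rfl]
  rw [lam_pow_succ (e+1) tw, lam_pow_succ e tw]
  exact (G1 (lam^[e] tw)).symm

lemma famD2 (k : ℕ) :
    lam^[k] tw * lam^[k] xw = lam^[k] sw * lam^[k+1] tw := by
  rw [show lam^[k+1] tw = lam^[k] (lam tw) from Function.iterate_succ_apply lam k tw,
    ← iter_lam_mul, ← iter_lam_mul]
  exact congrArg _ D2b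

lemma famD3 (k : ℕ) :
    lam^[k] tw = lam^[k] xw * lam^[k+1] tw * lam^[k] sw := by
  rw [show lam^[k+1] tw = lam^[k] (lam tw) from Function.iterate_succ_apply lam k tw,
    ← iter_lam_mul, ← iter_lam_mul]
  exact congrArg _ D3b

end Families

theorem hrels : ∀ r ∈ BVGen.bvRels, FreeGroup.lift fgen r = 1 := by
  have pre : ∀ u v : FreeGroup BVGen,
      FreeGroup.lift fgen u = FreeGroup.lift fgen v → FreeGroup.lift fgen (grel u v) = 1 := by
    intro u v h
    rw [grel, map_mul, map_inv, h, mul_inv_cancel]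
  intro r hr
  simp only [BVGen.bvRels, Set.mem_setOf_eq] at hr
  rcases hr with ⟨i, j, hij, rfl⟩ | ⟨i, j, h1, h2, rfl⟩ | ⟨i, h1, rfl⟩ | ⟨i, j, h1, h2, rfl⟩ |
    ⟨i, h1, rfl⟩ | ⟨i, j, h1, h2, rfl⟩ | ⟨i, h1, rfl⟩ | ⟨i, j, h2, rfl⟩ | ⟨i, rfl⟩ |
    ⟨i, j, h2, rfl⟩ | ⟨i, h1, rfl⟩ | ⟨i, h1, rfl⟩ <;>
    refine pre _ _ ?_ <;>
    simp only [BVGen.X, BVGen.S, BVGen.T, map_mul, FreeGroup.lift_apply_of, fgen_x, fgen_s, fgen_t]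
  · -- A
    obtain ⟨e, rfl⟩ : ∃ e, j = i + (e+1) := ⟨j - i - 1, by omega⟩
    exact famA i e
  · -- B1
    obtain ⟨k, rfl⟩ : ∃ k, i = k + 1 := ⟨i - 1, by omega⟩
    obtain ⟨e, rfl⟩ : ∃ e, j = k + (e+3) := ⟨j - k - 3, by omega⟩
    simp only [Nat.add_sub_cancel, show k + (e+3) - 1 = k + (e+2) from by omega]
    exact famB1 k e
  · -- B2
    obtain ⟨k, rfl⟩ : ∃ k, i = k + 1 := ⟨i - 1, by omega⟩
    simp only [Nat.add_sub_cancel]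
    exact famB2 k
  · -- B3
    obtain ⟨k, rfl⟩ : ∃ k, i = k + 1 := ⟨i - 1, by omega⟩
    obtain ⟨e, rfl⟩ : ∃ e, j = k + (e+3) := ⟨j - k - 3, by omega⟩
    simp only [Nat.add_sub_cancel, show k + (e+3) - 1 = k + (e+2) from by omega]
    exact famB3 k e
  · -- B4
    obtain ⟨k, rfl⟩ : ∃ k, i = k + 1 := ⟨i - 1, by omega⟩
    simp only [Nat.add_sub_cancel]
    exact famB4 k
  · -- C1
    obtain ⟨k, rfl⟩ : ∃ k, i = k + 1 := ⟨i - 1, by omega⟩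
    obtain ⟨e, rfl⟩ : ∃ e, j = k + (e+2) := ⟨j - k - 2, by omega⟩
    simp only [Nat.add_sub_cancel]
    exact famC1 k e
  · -- C2
    obtain ⟨k, rfl⟩ : ∃ k, i = k + 1 := ⟨i - 1, by omega⟩
    simp only [Nat.add_sub_cancel]
    exact famC2 k
  · -- C3
    obtain ⟨k, rfl⟩ : ∃ k, i = j + (k+2) := ⟨i - j - 2, by omega⟩
    simp only [show j + (k+2) - 1 = j + (k+1) from by omega,
      show j + (k+2) + 1 - 1 = j + (k+2) from by omega]
    exact famC3 j k
  · -- C4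
    simp only [Nat.add_sub_cancel, show i + 2 - 1 = i + 1 from by omega]
    exact famC4 i
  · -- D1
    obtain ⟨k, rfl⟩ : ∃ k, i = j + (k+2) := ⟨i - j - 2, by omega⟩
    simp only [show j + (k+2) - 1 = j + (k+1) from by omega,
      show j + (k+2) + 1 - 1 = j + (k+2) from by omega]
    exact famD1 j k
  · -- D2
    obtain ⟨k, rfl⟩ : ∃ k, i = k + 1 := ⟨i - 1, by omega⟩
    simp only [Nat.add_sub_cancel]
    exact famD2 k
  · -- D3
    obtain ⟨k, rfl⟩ : ∃ k, i = k + 1 := ⟨i - 1, by omega⟩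
    simp only [Nat.add_sub_cancel]
    exact famD3 k

end PBVAux

namespace PBVAux

/-- The point `1^k 0 0 0 ⋯` of the Cantor set. -/
def upt : ℕ → Seq
  | 0 => fun _ => false
  | k+1 => cn true (upt k)

@[simp] lemma upt_zero (n : ℕ) : upt 0 n = false := rfl
@[simp] lemma upt_succ_zero (k : ℕ) : upt (k+1) 0 = true := rfl
@[simp] lemma tl_upt_succ (k : ℕ) : tl (upt (k+1)) = upt k := rfl
@[simp] lemma cn_false_upt0 : cn false (upt 0) = upt 0 := funext fun n => by cases n <;> rfl
@[simp] lemma tl_upt0 : tl (upt 0) = upt 0 := rfl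

/-- The cocycle part of `σ̂₁²`. -/
def Dsig : A := cs * actA se cs

lemma sw_sq_left : (sw * sw).left = Dsig := by
  simp [Dsig]

lemma eval_Dsig (k j : ℕ) :
    loneA^[k] Dsig (upt j, upt (j+1)) =
      (if k = j then Multiplicative.ofAdd (2 : ℤ) else 1) := by
  induction k generalizing j with
  | zero =>
      match j with
      | 0 =>
          simp [Dsig, cs, cInd, s1f, e1, upt, ← ofAdd_add]
      | 1 =>
          simp [Dsig, cs, cInd, s1f, upt]
      | (n+2) =>
          simp [Dsig, cs, cInd, s1f, upt]
  | succ k ih =>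
      rw [Function.iterate_succ_apply']
      match j with
      | 0 => simp [loneA, upt]
      | (n+1) =>
          have : loneA (loneA^[k] Dsig) (upt (n+1), upt (n+2)) =
              loneA^[k] Dsig (upt n, upt (n+1)) := by
            simp [loneA, upt]
          rw [this, ih n]
          by_cases h : k = n <;> simp [h]

/-- The homomorphism from `BV` to the wreath-type group `W`. -/
noncomputable def Phi : GBV →* W := PresentedGroup.toGroup hrels

lemma Phi_sg (i : ℕ) : Phi (GBV.sg (i+1)) = lam^[i] sw := by
  rw [GBV.sg, Nat.add_sub_cancel]
  exact PresentedGroup.toGroup.of hrels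

lemma Phi_sg' (i : ℕ) : Phi (GBV.sg i) = lam^[i-1] sw := by
  rw [GBV.sg]
  exact PresentedGroup.toGroup.of hrels

lemma Phi_tg (i : ℕ) : Phi (GBV.tg i) = lam^[i-1] tw := by
  rw [GBV.tg]
  exact PresentedGroup.toGroup.of hrels

lemma right_sq_one (w : W) (hw : w.right * w.right = 1) (k : ℕ) :
    (lam^[k] w * lam^[k] w).right = 1 := by
  rw [← iter_lam_mul, iter_lam_right, show (w * w).right = w.right * w.right from rfl, hw,
    iter_loneE_one]

lemma hker : vRelsCl ≤ MonoidHom.ker (SemidirectProduct.rightHom.comp Phi) := by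
  apply Subgroup.normalClosure_le_normal
  rintro g ⟨i, hi, (rfl | rfl)⟩
  · simp only [SetLike.mem_coe]
    rw [MonoidHom.mem_ker, MonoidHom.comp_apply, map_pow, Phi_sg', pow_two]
    exact right_sq_one sw se_sq (i-1)
  · simp only [SetLike.mem_coe]
    rw [MonoidHom.mem_ker, MonoidHom.comp_apply, map_pow, Phi_tg, pow_two]
    exact right_sq_one tw te_sq (i-1)

end PBVAux


namespace PBVAux

lemma Phi_sq_left (i : ℕ) :
    (Phi (GBV.sg (i+1) ^ 2)).left = loneA^[i] Dsig := by
  rw [map_pow, Phi_sg, pow_two, ← iter_lam_mul, iter_lam_left, sw_sq_left]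

end PBVAux


open PBVAux in
/-- The kernel of the quotient homomorphism `BV → V` (the pure braided Thompson
group `PBV`) is not finitely generated. -/
theorem pbv_not_finitely_generated :
    ¬ (MonoidHom.ker (QuotientGroup.mk' vRelsCl)).FG := by
  rw [QuotientGroup.ker_mk']
  rintro ⟨S0, hS0⟩
  classical
  set m := S0.card with hm
  set qv : W → (Fin (m+1) → ℚ) :=
    fun w i => (((w.left (upt i, upt ((i : ℕ)+1))).toAdd : ℤ) : ℚ) with hqv
  set T : Finset (Fin (m+1) → ℚ) := S0.image (fun g => qv (Phi g)) with hT
  set SP : Submodule ℚ (Fin (m+1) → ℚ) := Submodule.span ℚ (T : Set _) with hSP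
  have key : ∀ g ∈ vRelsCl, (Phi g).right = 1 ∧ qv (Phi g) ∈ SP := by
    intro g hg
    rw [← hS0] at hg
    induction hg using Subgroup.closure_induction with
    | mem x hx =>
        refine ⟨?_, ?_⟩
        · have hx' : x ∈ vRelsCl := hS0 ▸ Subgroup.subset_closure hx
          exact hker hx'
        · exact Submodule.subset_span (Finset.mem_coe.2 (Finset.mem_image_of_mem _ hx))
    | one =>
        refine ⟨by simp, ?_⟩
        have : qv (Phi 1) = 0 := by
          funext i
          simp [hqv]
        rw [this]
        exact SP.zero_mem
    | mul x y hx hy ihx ihy =>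
        refine ⟨?_, ?_⟩
        · rw [map_mul]
          show (Phi x * Phi y).right = 1
          rw [SemidirectProduct.mul_right, ihx.1, ihy.1, one_mul]
        · have : qv (Phi (x * y)) = qv (Phi x) + qv (Phi y) := by
            funext i
            rw [map_mul]
            simp only [hqv, SemidirectProduct.mul_left, ihx.1, map_one, MulAut.one_apply,
              Pi.mul_apply, toAdd_mul, Int.cast_add, Pi.add_apply]
          rw [this]
          exact SP.add_mem ihx.2 ihy.2
    | inv x hx ihx =>
        refine ⟨?_, ?_⟩
        · rw [map_inv]
          show (Phi x)⁻¹.right = 1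
          rw [SemidirectProduct.inv_right, ihx.1, inv_one]
        · have : qv (Phi x⁻¹) = -qv (Phi x) := by
            funext i
            rw [map_inv]
            simp only [hqv, SemidirectProduct.inv_left, ihx.1, inv_one, map_one,
              MulAut.one_apply, Pi.inv_apply, toAdd_inv, Int.cast_neg, Pi.neg_apply]
          rw [this]
          exact SP.neg_mem ihx.2
  have hbasis : ∀ i : Fin (m+1), (Pi.single i (1:ℚ) : Fin (m+1) → ℚ) ∈ SP := by
    intro i
    have hmem : (GBV.sg ((i : ℕ)+1))^2 ∈ vRelsCl :=
      Subgroup.subset_normalClosure ⟨(i : ℕ)+1, by omega, Or.inl rfl⟩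
    obtain ⟨-, hq⟩ := key _ hmem
    have hval : qv (Phi ((GBV.sg ((i : ℕ)+1))^2)) = (2:ℚ) • (Pi.single i (1:ℚ) : Fin (m+1) → ℚ) := by
      funext j
      simp only [hqv, Phi_sq_left, eval_Dsig]
      by_cases h : (i : ℕ) = (j : ℕ)
      · have h' : j = i := by
          apply Fin.ext
          omega
        simp [h, h']
      · have h' : ¬ (j = i) := by
          intro hc
          exact h (by rw [hc])
        simp [h, h']
    have h2 := SP.smul_mem (2⁻¹ : ℚ) hq
    rw [hval, smul_smul] at h2
    norm_num at h2
    exact h2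
  have hSPtop : SP = ⊤ := by
    refine le_antisymm le_top ?_
    rw [← (Pi.basisFun ℚ (Fin (m+1))).span_eq, Submodule.span_le]
    rintro v ⟨i, rfl⟩
    simpa using hbasis i
  have h1 : Module.finrank ℚ SP ≤ m := by
    refine le_trans (finrank_span_finset_le_card T) ?_
    exact le_trans (Finset.card_image_le) le_rfl
  have h2 : Module.finrank ℚ SP = m + 1 := by
    rw [hSPtop, finrank_top, Module.finrank_pi]
    simp
  omega
end

section
/- Every element g of G_BF can be written as g = p · b · q^{−1}, where p and q belong to the submonoid of G_BF generated by {x_i : i ≥ 0} and b belongs to the subgroup of G_BF generated by all of the α_{ij} and β_{ij}. -/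
/-- Generators of the pure braided Thompson group `BF`.  `a i k` denotes
`α_{i+1, i+k+2}` and `b i k` denotes `β_{i+1, i+k+2}` (so that exactly the
generators `α_{ij}, β_{ij}` with `1 ≤ i < j` occur). -/
inductive BFGen : Type
  | x : ℕ → BFGen
  | a : ℕ → ℕ → BFGen
  | b : ℕ → ℕ → BFGen

namespace BFGen

/-- The free-group letter `x_i`. -/
def X (i : ℕ) : FreeGroup BFGen := FreeGroup.of (BFGen.x i)

/-- The free-group letter `α_{ij}` (meaningful for `1 ≤ i < j`). -/
def A (i j : ℕ) : FreeGroup BFGen := FreeGroup.of (BFGen.a (i - 1) (j - i - 1))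

/-- The free-group letter `β_{ij}` (meaningful for `1 ≤ i < j`). -/
def B (i j : ℕ) : FreeGroup BFGen := FreeGroup.of (BFGen.b (i - 1) (j - i - 1))

/-- The defining relations of `BF`. -/
def bfRels : Set (FreeGroup BFGen) :=
  { g |
    -- (A)
    (∃ i j, i < j ∧ g = grel (X j * X i) (X i * X (j + 1))) ∨
    -- (B1)
    (∃ r s i j, 1 ≤ r ∧ r < s ∧ ((s < i ∧ i < j) ∨ (1 ≤ i ∧ i < r ∧ s < j)) ∧
      g = grel ((A r s)⁻¹ * A i j * A r s) (A i j)) ∨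
    -- (B2) (s = i)
    (∃ r s j, 1 ≤ r ∧ r < s ∧ s < j ∧
      g = grel ((A r s)⁻¹ * A s j * A r s) (A r j * A s j * (A r j)⁻¹)) ∨
    -- (B3) (r = i)
    (∃ i s j, 1 ≤ i ∧ i < s ∧ s < j ∧
      g = grel ((A i s)⁻¹ * A i j * A i s)
        ((A i j * A s j) * A i j * (A i j * A s j)⁻¹)) ∨
    -- (B4)
    (∃ r i s j, 1 ≤ r ∧ r < i ∧ i < s ∧ s < j ∧
      g = grel ((A r s)⁻¹ * A i j * A r s)
        ((A r j * A s j * (A r j)⁻¹ * (A s j)⁻¹) * A i j *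
          (A r j * A s j * (A r j)⁻¹ * (A s j)⁻¹)⁻¹)) ∨
    -- (B5)
    (∃ r s i j, 1 ≤ r ∧ r < s ∧ ((s < i ∧ i < j) ∨ (1 ≤ i ∧ i < r ∧ s < j)) ∧
      g = grel ((A r s)⁻¹ * B i j * A r s) (B i j)) ∨
    -- (B6) (s = i)
    (∃ r s j, 1 ≤ r ∧ r < s ∧ s < j ∧
      g = grel ((A r s)⁻¹ * B s j * A r s) (B r j * B s j * (B r j)⁻¹)) ∨
    -- (B7) (r = i)
    (∃ i s j, 1 ≤ i ∧ i < s ∧ s < j ∧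
      g = grel ((A i s)⁻¹ * B i j * A i s)
        ((B i j * B s j) * B i j * (B i j * B s j)⁻¹)) ∨
    -- (B8)
    (∃ r i s j, 1 ≤ r ∧ r < i ∧ i < s ∧ s < j ∧
      g = grel ((A r s)⁻¹ * B i j * A r s)
        ((B r j * B s j * (B r j)⁻¹ * (B s j)⁻¹) * B i j *
          (B r j * B s j * (B r j)⁻¹ * (B s j)⁻¹)⁻¹)) ∨
    -- (C)
    (∃ i j, 1 ≤ i ∧ i < j ∧ g = grel (B i j) (B i (j + 1) * A i j)) ∨
    -- (D1) (k < i - 1)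
    (∃ i j k, 1 ≤ i ∧ i < j ∧ k + 1 < i ∧
      g = grel (A i j * X k) (X k * A (i + 1) (j + 1))) ∨
    -- (D2) (k = i - 1)
    (∃ i j, 1 ≤ i ∧ i < j ∧
      g = grel (A i j * X (i - 1)) (X (i - 1) * A (i + 1) (j + 1) * A i (j + 1))) ∨
    -- (D3) (i - 1 < k < j - 1)
    (∃ i j k, 1 ≤ i ∧ i < j ∧ i ≤ k ∧ k + 1 < j ∧
      g = grel (A i j * X k) (X k * A i (j + 1))) ∨
    -- (D4) (k = j - 1)
    (∃ i j, 1 ≤ i ∧ i < j ∧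
      g = grel (A i j * X (j - 1)) (X (j - 1) * A i (j + 1) * A i j)) ∨
    -- (D5) (k > j - 1)
    (∃ i j k, 1 ≤ i ∧ i < j ∧ j ≤ k ∧ g = grel (A i j * X k) (X k * A i j)) ∨
    -- (D6) (k < i - 1)
    (∃ i j k, 1 ≤ i ∧ i < j ∧ k + 1 < i ∧
      g = grel (B i j * X k) (X k * B (i + 1) (j + 1))) ∨
    -- (D7) (k = i - 1)
    (∃ i j, 1 ≤ i ∧ i < j ∧
      g = grel (B i j * X (i - 1)) (X (i - 1) * B (i + 1) (j + 1) * B i (j + 1))) ∨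
    -- (D8) (i - 1 < k < j - 1)
    (∃ i j k, 1 ≤ i ∧ i < j ∧ i ≤ k ∧ k + 1 < j ∧
      g = grel (B i j * X k) (X k * B i (j + 1))) ∨
    -- (D9) (k ≥ j - 1)
    (∃ i j k, 1 ≤ i ∧ i < j ∧ j ≤ k + 1 ∧
      g = grel (B i j * X k) (X k * B i j)) }

end BFGen

/-- The pure braided Thompson group `BF`, via its infinite presentation. -/
abbrev GBF : Type := PresentedGroup BFGen.bfRels

namespace GBF

/-- The generator `x_i` of `BF`. -/
def xg (i : ℕ) : GBF := PresentedGroup.of (BFGen.x i)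

/-- The generator `α_{ij}` of `BF` (meaningful for `1 ≤ i < j`). -/
def ag (i j : ℕ) : GBF := PresentedGroup.of (BFGen.a (i - 1) (j - i - 1))

/-- The generator `β_{ij}` of `BF` (meaningful for `1 ≤ i < j`). -/
def bg (i j : ℕ) : GBF := PresentedGroup.of (BFGen.b (i - 1) (j - i - 1))

end GBF

/-!
The `x_i` generate a monoid `P` with the right Ore property: by relation (A) any two generators
have a common right multiple of length two, and word reversing extends this to all of `P`.
By (D1)–(D9), conjugating an `α_{ij}` or `β_{ij}` by any `x_k` stays inside the subgroup `B`
generated by the `α`'s and `β`'s. Hence `P · B · P⁻¹` is closed under products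
(`q⁻¹ p' = c a⁻¹` by Ore, then `b` and `b'` are pushed outwards), so it is a subgroup; it
contains all generators of `BF`, hence is everything.
-/

section OreFraction

theorem exists_mul_eq_mul_of_mem_closure_of_mem {M : Type*} [Monoid M] {T : Set M}
    (hT : ∀ t ∈ T, ∀ u ∈ T, ∃ t' ∈ T, ∃ u' ∈ T, t * u' = u * t')
    {q : M} (hq : q ∈ Submonoid.closure T) :
    ∀ u ∈ T, ∃ r ∈ Submonoid.closure T, ∃ s ∈ Submonoid.closure T, q * r = u * s := by
  induction hq using Submonoid.closure_induction_left with
  | one => exact fun u hu => ⟨u, Submonoid.subset_closure hu, 1, one_mem _, by simp⟩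
  | mul_left t ht q _ ih =>
    intro u hu
    obtain ⟨t', ht', u', hu', htu⟩ := hT t ht u hu
    obtain ⟨r, hr, s, hs, hqr⟩ := ih u' hu'
    exact ⟨r, hr, t' * s, mul_mem (Submonoid.subset_closure ht') hs, by
      rw [mul_assoc, hqr, ← mul_assoc, htu, mul_assoc]⟩

theorem exists_mul_eq_mul_of_mem_closure {M : Type*} [Monoid M] {T : Set M}
    (hT : ∀ t ∈ T, ∀ u ∈ T, ∃ t' ∈ T, ∃ u' ∈ T, t * u' = u * t')
    {p : M} (hp : p ∈ Submonoid.closure T) :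
    ∀ q ∈ Submonoid.closure T,
      ∃ a ∈ Submonoid.closure T, ∃ c ∈ Submonoid.closure T, p * a = q * c := by
  induction hp using Submonoid.closure_induction_left with
  | one => exact fun q hq => ⟨q, hq, 1, one_mem _, by simp⟩
  | mul_left u hu p _ ih =>
    intro q hq
    obtain ⟨r, hr, s, hs, hqr⟩ := exists_mul_eq_mul_of_mem_closure_of_mem hT hq u hu
    obtain ⟨a, ha, c, hc, hpa⟩ := ih s hs
    exact ⟨a, ha, r * c, mul_mem hr hc, by rw [mul_assoc, hpa, ← mul_assoc, ← hqr, mul_assoc]⟩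

variable {G : Type*} [Group G]

theorem inv_mul_mul_mem_of_mem_closure {S : Set G} {K : Subgroup G} {g : G}
    (hS : ∀ s ∈ S, g⁻¹ * s * g ∈ K) {b : G} (hb : b ∈ Subgroup.closure S) :
    g⁻¹ * b * g ∈ K := by
  have : Subgroup.closure S ≤ K.comap (MulAut.conj g⁻¹).toMonoidHom :=
    (Subgroup.closure_le _).2 fun s hs => by simpa using hS s hs
  simpa using this hb

theorem Submonoid.inv_mul_mul_mem_of_mem_closure {T : Set G} {H : Subgroup G}
    (hT : ∀ t ∈ T, ∀ b ∈ H, t⁻¹ * b * t ∈ H) {m : G} (hm : m ∈ Submonoid.closure T) :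
    ∀ b ∈ H, m⁻¹ * b * m ∈ H := by
  induction hm using Submonoid.closure_induction with
  | mem t ht => exact hT t ht
  | one => simp
  | mul x y _ _ hx hy =>
    intro b hb
    simpa [mul_assoc] using hy _ (hx b hb)

def oreSubgroup (M : Submonoid G) (H : Subgroup G)
    (hore : ∀ p ∈ M, ∀ q ∈ M, ∃ a ∈ M, ∃ c ∈ M, p * a = q * c)
    (hconj : ∀ m ∈ M, ∀ b ∈ H, m⁻¹ * b * m ∈ H) : Subgroup G where
  carrier := {g | ∃ p ∈ M, ∃ q ∈ M, ∃ b ∈ H, g = p * b * q⁻¹}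
  one_mem' := ⟨1, one_mem _, 1, one_mem _, 1, one_mem _, by simp⟩
  inv_mem' := by
    rintro _ ⟨p, hp, q, hq, b, hb, rfl⟩
    exact ⟨q, hq, p, hp, b⁻¹, inv_mem hb, by group⟩
  mul_mem' := by
    rintro _ _ ⟨p, hp, q, hq, b, hb, rfl⟩ ⟨p', hp', q', hq', b', hb', rfl⟩
    obtain ⟨a, ha, c, hc, hac⟩ := hore p' hp' q hq
    have hfrac : q⁻¹ * p' = c * a⁻¹ := by
      rw [inv_mul_eq_iff_eq_mul, ← mul_assoc, eq_mul_inv_iff_mul_eq, hac]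
    refine ⟨p * c, mul_mem hp hc, q' * a, mul_mem hq' ha, (c⁻¹ * b * c) * (a⁻¹ * b' * a),
      mul_mem (hconj c hc b hb) (hconj a ha b' hb'), ?_⟩
    calc p * b * q⁻¹ * (p' * b' * q'⁻¹) = p * b * (q⁻¹ * p') * b' * q'⁻¹ := by group
      _ = p * b * (c * a⁻¹) * b' * q'⁻¹ := by rw [hfrac]
      _ = p * c * (c⁻¹ * b * c * (a⁻¹ * b' * a)) * (q' * a)⁻¹ := by group

end OreFraction

namespace GBF

open BFGen PresentedGroup

variable {i j k : ℕ}

-- The defining relations (A) and (D1)–(D9), read in `GBF`.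

theorem xg_mul_xg_of_lt (h : i < j) : xg j * xg i = xg i * xg (j + 1) :=
  mk_eq_mk_of_mul_inv_mem (Or.inl ⟨i, j, h, rfl⟩)

theorem ag_mul_xg_of_succ_lt (h1 : 1 ≤ i) (h2 : i < j) (hk : k + 1 < i) :
    ag i j * xg k = xg k * ag (i + 1) (j + 1) := by
  refine mk_eq_mk_of_mul_inv_mem ?_
  iterate 10 right
  exact Or.inl ⟨i, j, k, h1, h2, hk, rfl⟩

theorem ag_mul_xg_pred_left (h1 : 1 ≤ i) (h2 : i < j) :
    ag i j * xg (i - 1) = xg (i - 1) * (ag (i + 1) (j + 1) * ag i (j + 1)) := by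
  rw [← mul_assoc]
  refine mk_eq_mk_of_mul_inv_mem ?_
  iterate 11 right
  exact Or.inl ⟨i, j, h1, h2, rfl⟩

theorem ag_mul_xg_of_le_of_succ_lt (h1 : 1 ≤ i) (h2 : i < j) (hik : i ≤ k) (hkj : k + 1 < j) :
    ag i j * xg k = xg k * ag i (j + 1) := by
  refine mk_eq_mk_of_mul_inv_mem ?_
  iterate 12 right
  exact Or.inl ⟨i, j, k, h1, h2, hik, hkj, rfl⟩

theorem ag_mul_xg_pred_right (h1 : 1 ≤ i) (h2 : i < j) :
    ag i j * xg (j - 1) = xg (j - 1) * (ag i (j + 1) * ag i j) := by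
  rw [← mul_assoc]
  refine mk_eq_mk_of_mul_inv_mem ?_
  iterate 13 right
  exact Or.inl ⟨i, j, h1, h2, rfl⟩

theorem ag_mul_xg_of_le (h1 : 1 ≤ i) (h2 : i < j) (hjk : j ≤ k) :
    ag i j * xg k = xg k * ag i j := by
  refine mk_eq_mk_of_mul_inv_mem ?_
  iterate 14 right
  exact Or.inl ⟨i, j, k, h1, h2, hjk, rfl⟩

theorem bg_mul_xg_of_succ_lt (h1 : 1 ≤ i) (h2 : i < j) (hk : k + 1 < i) :
    bg i j * xg k = xg k * bg (i + 1) (j + 1) := by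
  refine mk_eq_mk_of_mul_inv_mem ?_
  iterate 15 right
  exact Or.inl ⟨i, j, k, h1, h2, hk, rfl⟩

theorem bg_mul_xg_pred_left (h1 : 1 ≤ i) (h2 : i < j) :
    bg i j * xg (i - 1) = xg (i - 1) * (bg (i + 1) (j + 1) * bg i (j + 1)) := by
  rw [← mul_assoc]
  refine mk_eq_mk_of_mul_inv_mem ?_
  iterate 16 right
  exact Or.inl ⟨i, j, h1, h2, rfl⟩

theorem bg_mul_xg_of_le_of_succ_lt (h1 : 1 ≤ i) (h2 : i < j) (hik : i ≤ k) (hkj : k + 1 < j) :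
    bg i j * xg k = xg k * bg i (j + 1) := by
  refine mk_eq_mk_of_mul_inv_mem ?_
  iterate 17 right
  exact Or.inl ⟨i, j, k, h1, h2, hik, hkj, rfl⟩

theorem bg_mul_xg_of_le_succ (h1 : 1 ≤ i) (h2 : i < j) (hjk : j ≤ k + 1) :
    bg i j * xg k = xg k * bg i j := by
  refine mk_eq_mk_of_mul_inv_mem ?_
  iterate 18 right
  exact ⟨i, j, k, h1, h2, hjk, rfl⟩

def positiveMonoid : Submonoid GBF := Submonoid.closure (Set.range xg)

def braidSubgroup : Subgroup GBF :=
  Subgroup.closure {h : GBF | ∃ i j, 1 ≤ i ∧ i < j ∧ (h = ag i j ∨ h = bg i j)}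

theorem ag_mem_braidSubgroup (h1 : 1 ≤ i) (h2 : i < j) : ag i j ∈ braidSubgroup :=
  Subgroup.subset_closure ⟨i, j, h1, h2, Or.inl rfl⟩

theorem bg_mem_braidSubgroup (h1 : 1 ≤ i) (h2 : i < j) : bg i j ∈ braidSubgroup :=
  Subgroup.subset_closure ⟨i, j, h1, h2, Or.inr rfl⟩

theorem xg_inv_mul_ag_mul_xg_mem (h1 : 1 ≤ i) (h2 : i < j) (k : ℕ) :
    (xg k)⁻¹ * ag i j * xg k ∈ braidSubgroup := by
  rw [mul_assoc]
  rcases lt_trichotomy (k + 1) i with hk | hk | hk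
  · rw [ag_mul_xg_of_succ_lt h1 h2 hk, inv_mul_cancel_left]
    exact ag_mem_braidSubgroup (by omega) (by omega)
  · obtain rfl : k = i - 1 := by omega
    rw [ag_mul_xg_pred_left h1 h2, inv_mul_cancel_left]
    exact mul_mem (ag_mem_braidSubgroup (by omega) (by omega))
      (ag_mem_braidSubgroup h1 (by omega))
  rcases lt_trichotomy (k + 1) j with hj | hj | hj
  · rw [ag_mul_xg_of_le_of_succ_lt h1 h2 (by omega) hj, inv_mul_cancel_left]
    exact ag_mem_braidSubgroup h1 (by omega)
  · obtain rfl : k = j - 1 := by omega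
    rw [ag_mul_xg_pred_right h1 h2, inv_mul_cancel_left]
    exact mul_mem (ag_mem_braidSubgroup h1 (by omega)) (ag_mem_braidSubgroup h1 h2)
  · rw [ag_mul_xg_of_le h1 h2 (by omega), inv_mul_cancel_left]
    exact ag_mem_braidSubgroup h1 h2

theorem xg_inv_mul_bg_mul_xg_mem (h1 : 1 ≤ i) (h2 : i < j) (k : ℕ) :
    (xg k)⁻¹ * bg i j * xg k ∈ braidSubgroup := by
  rw [mul_assoc]
  rcases lt_trichotomy (k + 1) i with hk | hk | hk
  · rw [bg_mul_xg_of_succ_lt h1 h2 hk, inv_mul_cancel_left]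
    exact bg_mem_braidSubgroup (by omega) (by omega)
  · obtain rfl : k = i - 1 := by omega
    rw [bg_mul_xg_pred_left h1 h2, inv_mul_cancel_left]
    exact mul_mem (bg_mem_braidSubgroup (by omega) (by omega))
      (bg_mem_braidSubgroup h1 (by omega))
  rcases lt_or_ge (k + 1) j with hj | hj
  · rw [bg_mul_xg_of_le_of_succ_lt h1 h2 (by omega) hj, inv_mul_cancel_left]
    exact bg_mem_braidSubgroup h1 (by omega)
  · rw [bg_mul_xg_of_le_succ h1 h2 hj, inv_mul_cancel_left]
    exact bg_mem_braidSubgroup h1 h2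

theorem positiveMonoid_conj_braidSubgroup :
    ∀ m ∈ positiveMonoid, ∀ b ∈ braidSubgroup, m⁻¹ * b * m ∈ braidSubgroup := by
  refine fun m hm => Submonoid.inv_mul_mul_mem_of_mem_closure ?_ hm
  rintro _ ⟨k, rfl⟩ b hb
  refine inv_mul_mul_mem_of_mem_closure ?_ hb
  rintro s ⟨i, j, h1, h2, rfl | rfl⟩
  · exact xg_inv_mul_ag_mul_xg_mem h1 h2 k
  · exact xg_inv_mul_bg_mul_xg_mem h1 h2 k

theorem positiveMonoid_ore :
    ∀ p ∈ positiveMonoid, ∀ q ∈ positiveMonoid,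
      ∃ a ∈ positiveMonoid, ∃ c ∈ positiveMonoid, p * a = q * c := by
  refine fun p hp => exists_mul_eq_mul_of_mem_closure ?_ hp
  rintro _ ⟨m, rfl⟩ _ ⟨k, rfl⟩
  rcases lt_trichotomy m k with h | rfl | h
  · exact ⟨xg m, ⟨m, rfl⟩, xg (k + 1), ⟨k + 1, rfl⟩, (xg_mul_xg_of_lt h).symm⟩
  · exact ⟨xg m, ⟨m, rfl⟩, xg m, ⟨m, rfl⟩, rfl⟩
  · exact ⟨xg (m + 1), ⟨m + 1, rfl⟩, xg k, ⟨k, rfl⟩, xg_mul_xg_of_lt h⟩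

theorem of_a_eq_ag (i k : ℕ) : of (a i k) = ag (i + 1) (i + k + 2) := by
  unfold ag
  congr 2
  omega

theorem of_b_eq_bg (i k : ℕ) : of (b i k) = bg (i + 1) (i + k + 2) := by
  unfold bg
  congr 2
  omega

theorem of_mem_positiveMonoid_or_braidSubgroup :
    ∀ z : BFGen, of z ∈ positiveMonoid ∨ of z ∈ braidSubgroup
  | .x i => Or.inl (Submonoid.subset_closure ⟨i, rfl⟩)
  | .a i k => Or.inr (of_a_eq_ag i k ▸ ag_mem_braidSubgroup (by omega) (by omega))
  | .b i k => Or.inr (of_b_eq_bg i k ▸ bg_mem_braidSubgroup (by omega) (by omega))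

end GBF

/-- Every element of `BF` factors as `p · b · q⁻¹` with `p, q` in the submonoid
generated by the `x_i` (positive elements of `F`) and `b` in the subgroup
generated by all the `α_{ij}` and `β_{ij}`. -/
theorem bf_factorization (g : GBF) :
    ∃ p ∈ Submonoid.closure (Set.range GBF.xg),
    ∃ q ∈ Submonoid.closure (Set.range GBF.xg),
    ∃ b ∈ Subgroup.closure
        {h : GBF | ∃ i j, 1 ≤ i ∧ i < j ∧ (h = GBF.ag i j ∨ h = GBF.bg i j)},
      g = p * b * q⁻¹ := by
  open GBF in
  refine PresentedGroup.generated_by _ (oreSubgroup positiveMonoid braidSubgroup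
    positiveMonoid_ore positiveMonoid_conj_braidSubgroup) (fun z => ?_) g
  rcases of_mem_positiveMonoid_or_braidSubgroup z with h | h
  · exact ⟨_, h, 1, one_mem _, 1, one_mem _, by simp⟩
  · exact ⟨1, one_mem _, 1, one_mem _, _, h, by simp⟩
end

section
/- For every element b of the subgroup of G_BF generated by all of the α_{ij} and β_{ij}, there exists n ≥ 2 such that b lies in the subgroup of G_BF generated by {α_{ij} : 1 ≤ i < j ≤ n − 1} ∪ {β_{in} : 1 ≤ i ≤ n − 1}. -/
section Aux

theorem mk_eq_of_grel {α : Type*} {rels : Set (FreeGroup α)} {u v : FreeGroup α}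
    (h : grel u v ∈ rels) : PresentedGroup.mk rels u = PresentedGroup.mk rels v := by
  have h1 : PresentedGroup.mk rels (grel u v) = 1 :=
    (QuotientGroup.eq_one_iff _).mpr (Subgroup.subset_normalClosure h)
  rw [grel, map_mul, map_inv] at h1
  exact mul_inv_eq_one.mp h1

/-- Relation (C) in `GBF`. -/
theorem relC {i j : ℕ} (hi : 1 ≤ i) (hij : i < j) :
    GBF.bg i j = GBF.bg i (j + 1) * GBF.ag i j := by
  have h : grel (BFGen.B i j) (BFGen.B i (j + 1) * BFGen.A i j) ∈ BFGen.bfRels := by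
    refine Or.inr (Or.inr (Or.inr (Or.inr (Or.inr (Or.inr (Or.inr (Or.inr (Or.inr
      (Or.inl ⟨i, j, hi, hij, rfl⟩)))))))))
  have := mk_eq_of_grel h
  rw [map_mul] at this
  exact this

/-- The generating set `P n`. -/
def PnSet (n : ℕ) : Set GBF :=
  ({h : GBF | ∃ i j, 1 ≤ i ∧ i < j ∧ j ≤ n - 1 ∧ h = GBF.ag i j} ∪
   {h : GBF | ∃ i, 1 ≤ i ∧ i ≤ n - 1 ∧ h = GBF.bg i n})

theorem Pn_mono_step {n : ℕ} (hn : 2 ≤ n) :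
    Subgroup.closure (PnSet n) ≤ Subgroup.closure (PnSet (n + 1)) := by
  rw [Subgroup.closure_le]
  rintro h (⟨i, j, hi, hij, hjn, rfl⟩ | ⟨i, hi, hin, rfl⟩)
  · exact Subgroup.subset_closure (Or.inl ⟨i, j, hi, hij, by omega, rfl⟩)
  · have hijn : i < n := by omega
    rw [relC hi hijn]
    have h1 : GBF.bg i (n + 1) ∈ PnSet (n + 1) := Or.inr ⟨i, hi, by omega, rfl⟩
    have h2 : GBF.ag i n ∈ PnSet (n + 1) := Or.inl ⟨i, n, hi, hijn, by omega, rfl⟩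
    exact mul_mem (Subgroup.subset_closure h1) (Subgroup.subset_closure h2)

theorem Pn_mono {m n : ℕ} (hm : 2 ≤ m) (hmn : m ≤ n) :
    Subgroup.closure (PnSet m) ≤ Subgroup.closure (PnSet n) := by
  induction n, hmn using Nat.le_induction with
  | base => exact le_rfl
  | succ n hn ih => exact ih.trans (Pn_mono_step (by omega))

end Aux

/-- Every element of the subgroup of `BF` generated by all the `α_{ij}` and
`β_{ij}` lies, for some `n ≥ 2`, in the subgroup generated by
`{α_{ij} : 1 ≤ i < j ≤ n-1} ∪ {β_{in} : 1 ≤ i ≤ n-1}`. -/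
theorem bf_braid_part_in_Pn (b : GBF)
    (hb : b ∈ Subgroup.closure
      {h : GBF | ∃ i j, 1 ≤ i ∧ i < j ∧ (h = GBF.ag i j ∨ h = GBF.bg i j)}) :
    ∃ n, 2 ≤ n ∧ b ∈ Subgroup.closure
      ({h : GBF | ∃ i j, 1 ≤ i ∧ i < j ∧ j ≤ n - 1 ∧ h = GBF.ag i j} ∪
       {h : GBF | ∃ i, 1 ≤ i ∧ i ≤ n - 1 ∧ h = GBF.bg i n}) := by
  induction hb using Subgroup.closure_induction with
  | mem h hmem =>
    obtain ⟨i, j, hi, hij, hc⟩ := hmem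
    refine ⟨j + 1, by omega, ?_⟩
    show h ∈ Subgroup.closure (PnSet (j + 1))
    rcases hc with rfl | rfl
    · exact Subgroup.subset_closure (Or.inl ⟨i, j, hi, hij, by omega, rfl⟩)
    · rw [relC hi hij]
      exact mul_mem
        (Subgroup.subset_closure (Or.inr ⟨i, hi, by omega, rfl⟩))
        (Subgroup.subset_closure (Or.inl ⟨i, j, hi, hij, by omega, rfl⟩))
  | one => exact ⟨2, le_rfl, one_mem _⟩
  | mul u v hu hv ihu ihv =>
    obtain ⟨m, hm, hum⟩ := ihu
    obtain ⟨n, hn, hvn⟩ := ihv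
    refine ⟨max m n, le_trans hm (le_max_left m n), ?_⟩
    exact mul_mem (Pn_mono hm (le_max_left m n) hum) (Pn_mono hn (le_max_right m n) hvn)
  | inv u hu ihu =>
    obtain ⟨m, hm, hum⟩ := ihu
    exact ⟨m, hm, inv_mem hum⟩
end
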